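/- arXiv:1401.7722 — 11 statements merged into one kernel-verified Lean document; each statement's English description precedes it below -/
import Mathlib

section
/- For all complex numbers x, y with |x| ≤ 1 and |y| ≤ 1, the fundamental form holds: −y·(a(y)·x^2 + b(y)·x + c(y))·P(x,y) = (1−p)(q·y+1−q)·((mu_h−mu_l)·x·y − mu_h·y + mu_l·x)·psi_0(y) + (1−p)(1−q)·mu_l·(y−1)·x·pi_{0,0}. -/
/-- The balance equations of the discrete-time preemptive priority queue
(early arrival system). -/
def BalanceEquations (p q mh ml : ℝ) (pi : ℕ → ℕ → ℝ) : Prop :=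
  ((1 - ((1-p)*(1-q) + p*(1-q)*mh + (1-p)*q*ml)) * pi 0 0 =
      (1-p)*(1-q)*mh * pi 1 0 + (1-p)*(1-q)*ml * pi 0 1) ∧
  (∀ i : ℕ, 1 ≤ i →
    (1 - ((1-p)*(1-q)*(1-mh) + p*(1-q)*mh)) * pi i 0 =
      p*(1-q)*(1-mh) * pi (i-1) 0 + (1-p)*(1-q)*mh * pi (i+1) 0) ∧
  (∀ j : ℕ, 1 ≤ j →
    (1 - ((1-p)*(1-q)*(1-ml) + p*(1-q)*mh + (1-p)*q*ml)) * pi 0 j =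
      (p*q*mh + (1-p)*q*(1-ml)) * pi 0 (j-1) + (1-p)*(1-q)*ml * pi 0 (j+1) +
      (1-p)*q*mh * pi 1 (j-1) + (1-p)*(1-q)*mh * pi 1 j) ∧
  (∀ i j : ℕ, 1 ≤ i → 1 ≤ j →
    (1 - ((1-p)*(1-q)*(1-mh) + p*(1-q)*mh)) * pi i j =
      p*(1-q)*(1-mh) * pi (i-1) j + (1-p)*(1-q)*mh * pi (i+1) j +
      (1-p)*q*mh * pi (i+1) (j-1) + (p*q*mh + (1-p)*q*(1-mh)) * pi i (j-1) +
      p*q*(1-mh) * pi (i-1) (j-1))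

/-!
Both sides are double power series in `x, y` whose coefficients are linear in `π`: multiplying
`P` by a monomial `x^s y^t` shifts its coefficient array, and `ψ₀(y)`, `π₀₀` are the
generating functions of the row `i = 0` and of the entry `(0, 0)` of `π`. Comparing the
coefficients of `x^I y^J`, the two sides agree identically when `I = 0` or `J = 0`, and
otherwise the equality is precisely the balance equation at `π_{I-1, J-1}` (one of the four
kinds, according to whether `I - 1` and `J - 1` vanish). Since `π` is summable, all series
converge absolutely on the closed bidisc, so the coefficientwise identity passes to the sums.
-/

def shiftCoeffs (s t : ℕ) (c : ℕ → ℕ → ℝ) (i j : ℕ) : ℝ :=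
  if s ≤ i ∧ t ≤ j then c (i - s) (j - t) else 0

def gfTerm (c : ℕ → ℕ → ℝ) (x y : ℂ) (ij : ℕ × ℕ) : ℂ :=
  c ij.1 ij.2 * x ^ ij.1 * y ^ ij.2

/-- A list `m` of triples `(a, s, t)` encodes the polynomial `∑ a * x ^ s * y ^ t`;
`polyMulCoeffs m c` is the coefficient array of its product with the series of `c`. -/
def polyMulCoeffs (m : List (ℝ × ℕ × ℕ)) (c : ℕ → ℕ → ℝ) (i j : ℕ) : ℝ :=
  (m.map fun a => a.1 * shiftCoeffs a.2.1 a.2.2 c i j).sum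

def polyEval (m : List (ℝ × ℕ × ℕ)) (x y : ℂ) : ℂ :=
  (m.map fun a => (a.1 : ℂ) * x ^ a.2.1 * y ^ a.2.2).sum

def rowZero (c : ℕ → ℕ → ℝ) (i j : ℕ) : ℝ :=
  if i = 0 then c 0 j else 0

def originCoeff (c : ℕ → ℕ → ℝ) (i j : ℕ) : ℝ :=
  if i = 0 ∧ j = 0 then c 0 0 else 0

section GeneratingFunctions

variable {c d : ℕ → ℕ → ℝ} {x y S : ℂ}

theorem gfTerm_add : gfTerm (c + d) x y = gfTerm c x y + gfTerm d x y := by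
  ext ij
  simp only [gfTerm, Pi.add_apply, Complex.ofReal_add]
  ring

theorem summable_gfTerm (hc : Summable fun ij : ℕ × ℕ => c ij.1 ij.2) (hx : ‖x‖ ≤ 1)
    (hy : ‖y‖ ≤ 1) : Summable (gfTerm c x y) := by
  refine Summable.of_norm_bounded hc.abs fun ij => ?_
  simp only [gfTerm, norm_mul, norm_pow, Complex.norm_real, Real.norm_eq_abs]
  calc |c ij.1 ij.2| * ‖x‖ ^ ij.1 * ‖y‖ ^ ij.2 ≤ |c ij.1 ij.2| * 1 * 1 := by
        gcongr <;> exact pow_le_one₀ (norm_nonneg _) ‹_›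
    _ = |c ij.1 ij.2| := by ring

theorem summable_rowSeries (hc : Summable fun ij : ℕ × ℕ => c ij.1 ij.2) (hy : ‖y‖ ≤ 1) :
    Summable fun j => (c 0 j : ℂ) * y ^ j := by
  simpa [gfTerm, Function.comp_def] using
    (summable_gfTerm hc (x := 0) (by simp) hy).comp_injective (Prod.mk_right_injective 0)

theorem hasSum_gfTerm_shiftCoeffs (s t : ℕ) (h : HasSum (gfTerm c x y) S) :
    HasSum (gfTerm (shiftCoeffs s t c) x y) (x ^ s * y ^ t * S) := by
  rw [← (add_left_injective (s, t)).hasSum_iff]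
  · refine (h.mul_left (x ^ s * y ^ t)).congr_fun fun ij => ?_
    simp only [Function.comp_apply, gfTerm, shiftCoeffs, Prod.fst_add, Prod.snd_add,
      Nat.le_add_left, and_self, if_true, Nat.add_sub_cancel, pow_add]
    ring
  · rintro ⟨i, j⟩ hij
    have hout : ¬(s ≤ i ∧ t ≤ j) := fun ⟨hi, hj⟩ =>
      hij ⟨(i - s, j - t), by simp [Nat.sub_add_cancel hi, Nat.sub_add_cancel hj]⟩
    simp [gfTerm, shiftCoeffs, hout]

theorem hasSum_gfTerm_polyMulCoeffs (m : List (ℝ × ℕ × ℕ)) (h : HasSum (gfTerm c x y) S) :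
    HasSum (gfTerm (polyMulCoeffs m c) x y) (polyEval m x y * S) := by
  induction m with
  | nil =>
    rw [polyEval, List.map_nil, List.sum_nil, zero_mul]
    exact hasSum_zero.congr_fun fun ij => by simp [gfTerm, polyMulCoeffs]
  | cons a m ih =>
    have hcons := ((hasSum_gfTerm_shiftCoeffs a.2.1 a.2.2 h).mul_left (a.1 : ℂ)).add ih
    rw [show polyEval (a :: m) x y * S = a.1 * (x ^ a.2.1 * y ^ a.2.2 * S) + polyEval m x y * S by
      simp only [polyEval, List.map_cons, List.sum_cons]; ring]
    refine hcons.congr_fun fun ij => ?_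
    simp only [gfTerm, polyMulCoeffs, List.map_cons, List.sum_cons]
    push_cast
    ring

variable (x) in
theorem hasSum_gfTerm_rowZero (h : HasSum (fun j => (c 0 j : ℂ) * y ^ j) S) :
    HasSum (gfTerm (rowZero c) x y) S := by
  rw [← (Prod.mk_right_injective 0).hasSum_iff]
  · simpa [gfTerm, rowZero, Function.comp_def] using h
  · rintro ⟨i, j⟩ hij
    have hi : i ≠ 0 := fun hi => hij ⟨j, by simp [hi]⟩
    simp [gfTerm, rowZero, hi]

variable (c x y) in
theorem hasSum_gfTerm_originCoeff : HasSum (gfTerm (originCoeff c) x y) (c 0 0) := by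
  convert hasSum_single (0, 0) fun ij hij => ?_
  · simp [gfTerm, originCoeff]
  · have : ¬(ij.1 = 0 ∧ ij.2 = 0) := fun h => hij (Prod.ext h.1 h.2)
    simp [gfTerm, originCoeff, this]

end GeneratingFunctions

section PriorityQueue

variable (p q mh ml : ℝ)

def kernelMonomials : List (ℝ × ℕ × ℕ) :=
  [(1, 1, 1),
    (-(p * (1 - mh) * q), 2, 2), (-(p * (1 - mh) * (1 - q)), 2, 1),
    (-((p * mh + (1 - p) * (1 - mh)) * q), 1, 2),
    (-((p * mh + (1 - p) * (1 - mh)) * (1 - q)), 1, 1),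
    (-((1 - p) * mh * q), 0, 2), (-((1 - p) * mh * (1 - q)), 0, 1)]

def boundaryMonomials : List (ℝ × ℕ × ℕ) :=
  [((1 - p) * q * (mh - ml), 1, 2), ((1 - p) * (1 - q) * (mh - ml), 1, 1),
    (-((1 - p) * q * mh), 0, 2), (-((1 - p) * (1 - q) * mh), 0, 1),
    ((1 - p) * q * ml, 1, 1), ((1 - p) * (1 - q) * ml, 1, 0)]

def originMonomials : List (ℝ × ℕ × ℕ) :=
  [((1 - p) * (1 - q) * ml, 1, 1), (-((1 - p) * (1 - q) * ml), 1, 0)]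

theorem polyEval_kernelMonomials (x y : ℂ) :
    polyEval (kernelMonomials p q mh) x y =
      -y * (((p:ℂ) * (1 - (mh:ℂ)) * ((q:ℂ)*y + 1 - (q:ℂ))) * x^2
            + (((p:ℂ)*(mh:ℂ) + (1 - (p:ℂ))*(1 - (mh:ℂ))) * ((q:ℂ)*y + 1 - (q:ℂ)) - 1) * x
            + ((1 - (p:ℂ))*(mh:ℂ)*((q:ℂ)*y + 1 - (q:ℂ)))) := by
  simp only [polyEval, kernelMonomials, List.map_cons, List.map_nil, List.sum_cons, List.sum_nil]
  push_cast
  ring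

theorem polyEval_boundaryMonomials (x y : ℂ) :
    polyEval (boundaryMonomials p q mh ml) x y =
      (1 - (p:ℂ)) * ((q:ℂ)*y + 1 - (q:ℂ))
        * (((mh:ℂ) - (ml:ℂ)) * x * y - (mh:ℂ) * y + (ml:ℂ) * x) := by
  simp only [polyEval, boundaryMonomials, List.map_cons, List.map_nil, List.sum_cons, List.sum_nil]
  push_cast
  ring

theorem polyEval_originMonomials (x y : ℂ) :
    polyEval (originMonomials p q ml) x y =
      (1 - (p:ℂ)) * (1 - (q:ℂ)) * (ml:ℂ) * (y - 1) * x := by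
  simp only [polyEval, originMonomials, List.map_cons, List.map_nil, List.sum_cons, List.sum_nil]
  push_cast
  ring

theorem polyMulCoeffs_kernelMonomials {c : ℕ → ℕ → ℝ}
    (hc : BalanceEquations p q mh ml c) :
    polyMulCoeffs (kernelMonomials p q mh) c =
      polyMulCoeffs (boundaryMonomials p q mh ml) (rowZero c) +
        polyMulCoeffs (originMonomials p q ml) (originCoeff c) := by
  obtain ⟨h00, hrow, hcol, hint⟩ := hc
  ext i j
  rcases i with _ | _ | i <;> rcases j with _ | _ | j <;>
    simp [polyMulCoeffs, kernelMonomials, boundaryMonomials, originMonomials, shiftCoeffs,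
      rowZero, originCoeff, -mul_eq_mul_right_iff, -mul_eq_mul_left_iff]
  case zero.succ.zero | zero.succ.succ => ring
  case succ.zero.succ.zero => linear_combination h00
  case succ.zero.succ.succ =>
    have h := hcol (j + 1) (by omega)
    simp only [Nat.add_sub_cancel] at h
    linear_combination h
  case succ.succ.succ.zero =>
    have h := hrow (i + 1) (by omega)
    simp only [Nat.add_sub_cancel] at h
    linear_combination h
  case succ.succ.succ.succ =>
    have h := hint (i + 1) (j + 1) (by omega) (by omega)
    simp only [Nat.add_sub_cancel] at h
    linear_combination h

end PriorityQueue

theorem fundamental_form_general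
    (p q mh ml : ℝ)
    (pi : ℕ → ℕ → ℝ)
    (hsum : HasSum (fun ij : ℕ × ℕ => pi ij.1 ij.2) 1)
    (hbal : BalanceEquations p q mh ml pi) :
    ∀ x y : ℂ, ‖x‖ ≤ 1 → ‖y‖ ≤ 1 →
      -y * (((p:ℂ) * (1 - (mh:ℂ)) * ((q:ℂ)*y + 1 - (q:ℂ))) * x^2
            + (((p:ℂ)*(mh:ℂ) + (1 - (p:ℂ))*(1 - (mh:ℂ))) * ((q:ℂ)*y + 1 - (q:ℂ)) - 1) * x
            + ((1 - (p:ℂ))*(mh:ℂ)*((q:ℂ)*y + 1 - (q:ℂ))))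
          * (∑' ij : ℕ × ℕ, (pi ij.1 ij.2 : ℂ) * x ^ ij.1 * y ^ ij.2)
        = (1 - (p:ℂ)) * ((q:ℂ)*y + 1 - (q:ℂ))
            * (((mh:ℂ) - (ml:ℂ)) * x * y - (mh:ℂ) * y + (ml:ℂ) * x)
            * (∑' j : ℕ, (pi 0 j : ℂ) * y ^ j)
          + (1 - (p:ℂ)) * (1 - (q:ℂ)) * (ml:ℂ) * (y - 1) * x * (pi 0 0 : ℂ) := by
  intro x y hx hy
  have hP := (summable_gfTerm hsum.summable hx hy).hasSum
  have hψ₀ := hasSum_gfTerm_rowZero x (summable_rowSeries hsum.summable hy).hasSum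
  have hL := hasSum_gfTerm_polyMulCoeffs (kernelMonomials p q mh) hP
  have hR := (hasSum_gfTerm_polyMulCoeffs (boundaryMonomials p q mh ml) hψ₀).add
    (hasSum_gfTerm_polyMulCoeffs (originMonomials p q ml) (hasSum_gfTerm_originCoeff pi x y))
  rw [polyMulCoeffs_kernelMonomials p q mh ml hbal, gfTerm_add] at hL
  rw [← polyEval_kernelMonomials, ← polyEval_boundaryMonomials, ← polyEval_originMonomials]
  exact hL.unique hR

/-- the fundamental form of the generating functions. -/
theorem fundamental_form
    (p q mh ml : ℝ)
    (hp : p ∈ Set.Ioo (0:ℝ) 1) (hq : q ∈ Set.Ioo (0:ℝ) 1)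
    (hmh : mh ∈ Set.Ioo (0:ℝ) 1) (hml : ml ∈ Set.Ioo (0:ℝ) 1)
    (hpar : p + q + mh + ml = 1)
    (hrho : p / mh + q / ml < 1)
    (pi : ℕ → ℕ → ℝ)
    (hnn : ∀ i j : ℕ, 0 ≤ pi i j)
    (hsum : HasSum (fun ij : ℕ × ℕ => pi ij.1 ij.2) 1)
    (hbal : BalanceEquations p q mh ml pi) :
    ∀ x y : ℂ, ‖x‖ ≤ 1 → ‖y‖ ≤ 1 →
      -y * (((p:ℂ) * (1 - (mh:ℂ)) * ((q:ℂ)*y + 1 - (q:ℂ))) * x^2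
            + (((p:ℂ)*(mh:ℂ) + (1 - (p:ℂ))*(1 - (mh:ℂ))) * ((q:ℂ)*y + 1 - (q:ℂ)) - 1) * x
            + ((1 - (p:ℂ))*(mh:ℂ)*((q:ℂ)*y + 1 - (q:ℂ))))
          * (∑' ij : ℕ × ℕ, (pi ij.1 ij.2 : ℂ) * x ^ ij.1 * y ^ ij.2)
        = (1 - (p:ℂ)) * ((q:ℂ)*y + 1 - (q:ℂ))
            * (((mh:ℂ) - (ml:ℂ)) * x * y - (mh:ℂ) * y + (ml:ℂ) * x)
            * (∑' j : ℕ, (pi 0 j : ℂ) * y ^ j)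
          + (1 - (p:ℂ)) * (1 - (q:ℂ)) * (ml:ℂ) * (y - 1) * x * (pi 0 0 : ℂ) :=
  fundamental_form_general p q mh ml pi hsum hbal
end

section
/- Let y_b = ((1/(p·mu_h+(1−p)(1−mu_h))) − (1−q))/q, the unique root of b(y) = 0. Then 1 < y_0 < y_b < y_1. -/
/-- the branch points and the root of `b(y) = 0` satisfy
`1 < y_0 < y_b < y_1`. -/
theorem branch_points_ordering
    (p q mh ml : ℝ)
    (hp : p ∈ Set.Ioo (0:ℝ) 1) (hq : q ∈ Set.Ioo (0:ℝ) 1)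
    (hmh : mh ∈ Set.Ioo (0:ℝ) 1) (hml : ml ∈ Set.Ioo (0:ℝ) 1)
    (hpar : p + q + mh + ml = 1)
    (hrho : p / mh + q / ml < 1)
    (yb y0 y1 : ℝ)
    (hyb : yb = ((1 / (p*mh + (1-p)*(1-mh))) - (1-q)) / q)
    (hy0 : y0 = (p*mh + (1-p)*(1-mh) - 2*Real.sqrt (p*mh*(1-p)*(1-mh)))
                  / ((p*mh - (1-p)*(1-mh))^2 * q) - (1-q)/q)
    (hy1 : y1 = (p*mh + (1-p)*(1-mh) + 2*Real.sqrt (p*mh*(1-p)*(1-mh)))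
                  / ((p*mh - (1-p)*(1-mh))^2 * q) - (1-q)/q) :
    1 < y0 ∧ y0 < yb ∧ yb < y1 := by
  obtain ⟨hp0, hp1⟩ := hp
  obtain ⟨hq0, hq1⟩ := hq
  obtain ⟨hmh0, hmh1⟩ := hmh
  obtain ⟨hml0, hml1⟩ := hml
  have hpmh : p + mh < 1 := by linarith
  have hpm : p < mh := by
    have h2 : 0 < q / ml := div_pos hq0 hml0
    have h1 : p / mh < 1 := by linarith
    exact (div_lt_one hmh0).mp h1
  have hA : 0 < p * mh := mul_pos hp0 hmh0
  have hB : 0 < (1 - p) * (1 - mh) := mul_pos (by linarith) (by linarith)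
  have hABlt : p * mh < (1 - p) * (1 - mh) := by nlinarith
  obtain ⟨sa, hsa0, hsa⟩ : ∃ x : ℝ, 0 < x ∧ x ^ 2 = p * mh :=
    ⟨Real.sqrt (p * mh), Real.sqrt_pos.mpr hA, Real.sq_sqrt hA.le⟩
  obtain ⟨sb, hsb0, hsb⟩ : ∃ x : ℝ, 0 < x ∧ x ^ 2 = (1 - p) * (1 - mh) :=
    ⟨Real.sqrt ((1 - p) * (1 - mh)), Real.sqrt_pos.mpr hB, Real.sq_sqrt hB.le⟩
  have hsab : sa < sb := by
    refine lt_of_pow_lt_pow_left₀ 2 hsb0.le ?_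
    rw [hsa, hsb]; exact hABlt
  have hr : Real.sqrt (p * mh * (1 - p) * (1 - mh)) = sa * sb := by
    rw [show p * mh * (1 - p) * (1 - mh) = (sa * sb) ^ 2 by
        rw [mul_pow, hsa, hsb]; ring,
      Real.sqrt_sq (by positivity)]
  -- sa + sb < 1
  have h1 : sa < (p + mh) / 2 := by
    refine lt_of_pow_lt_pow_left₀ 2 (by linarith) ?_
    rw [hsa]
    nlinarith [mul_pos (sub_pos.mpr hpm) (sub_pos.mpr hpm)]
  have h2 : sb ≤ (2 - p - mh) / 2 := by
    refine le_of_pow_le_pow_left₀ (n := 2) (by norm_num) (by linarith) ?_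
    rw [hsb]
    nlinarith [sq_nonneg (p - mh)]
  have hsum1 : sa + sb < 1 := by linarith
  have hdne : sb - sa ≠ 0 := sub_ne_zero.mpr hsab.ne'
  have hsne : sa + sb ≠ 0 := by positivity
  have hqne : q ≠ 0 := ne_of_gt hq0
  -- Rewrite the three quantities
  have hy0' : y0 = (1 / (sa + sb) ^ 2 - (1 - q)) / q := by
    rw [hy0, hr, ← hsa, ← hsb]
    rw [show sa ^ 2 + sb ^ 2 - 2 * (sa * sb) = (sb - sa) ^ 2 by ring,
      show (sa ^ 2 - sb ^ 2) ^ 2 = (sb - sa) ^ 2 * (sa + sb) ^ 2 by ring]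
    field_simp
  have hy1' : y1 = (1 / (sb - sa) ^ 2 - (1 - q)) / q := by
    rw [hy1, hr, ← hsa, ← hsb]
    rw [show sa ^ 2 + sb ^ 2 + 2 * (sa * sb) = (sa + sb) ^ 2 by ring,
      show (sa ^ 2 - sb ^ 2) ^ 2 = (sb - sa) ^ 2 * (sa + sb) ^ 2 by ring]
    field_simp
  have hyb' : yb = (1 / (sa ^ 2 + sb ^ 2) - (1 - q)) / q := by
    rw [hyb, ← hsa, ← hsb]
  -- key inequalities between denominators
  have hd0 : (0:ℝ) < (sb - sa) ^ 2 := by positivity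
  have hprod : 0 < sa * sb := mul_pos hsa0 hsb0
  have hdm : (sb - sa) ^ 2 < sa ^ 2 + sb ^ 2 := by
    rw [show (sb - sa) ^ 2 = sa ^ 2 + sb ^ 2 - 2 * (sa * sb) by ring]
    linarith
  have hms : sa ^ 2 + sb ^ 2 < (sa + sb) ^ 2 := by
    rw [show (sa + sb) ^ 2 = sa ^ 2 + sb ^ 2 + 2 * (sa * sb) by ring]
    linarith
  have hs1 : (sa + sb) ^ 2 < 1 := by
    have := pow_lt_pow_left₀ hsum1 (by positivity : (0:ℝ) ≤ sa + sb) (n := 2) two_ne_zero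
    simpa using this
  have hspos : (0:ℝ) < (sa + sb) ^ 2 := by positivity
  have hmpos : (0:ℝ) < sa ^ 2 + sb ^ 2 := by positivity
  refine ⟨?_, ?_, ?_⟩
  · rw [hy0', lt_div_iff₀ hq0]
    have : 1 < 1 / (sa + sb) ^ 2 := (one_lt_div hspos).mpr hs1
    linarith
  · rw [hy0', hyb', div_lt_div_iff_of_pos_right hq0]
    have := one_div_lt_one_div_of_lt hmpos hms
    linarith
  · rw [hyb', hy1', div_lt_div_iff_of_pos_right hq0]
    have := one_div_lt_one_div_of_lt hd0 hdm
    linarith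
end

section
/- For every real y in [−1,1]: Delta(y) > 0, x_0(y) < x_1(y), and 0 < x_0(y) ≤ 1. Moreover, at y = 0 one has 0 < x_0(0) < 1 < x_1(0). -/
/-- Auxiliary quadratic root facts. Here `a = A*s`, `b = K*s - 1`, `c = C*s`. -/
lemma quadAux (A C K s : ℝ) (hA : 0 < A) (hC : 0 < C) (hK : 0 < K)
    (hsum : A + C + K = 1) (hAC : A < C) (hs0 : 0 < s) (hs1 : s ≤ 1) :
    0 < (K*s - 1)^2 - 4*(A*s)*(C*s) ∧
    0 < -(K*s - 1) - Real.sqrt ((K*s - 1)^2 - 4*(A*s)*(C*s)) ∧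
    -(K*s - 1) - Real.sqrt ((K*s - 1)^2 - 4*(A*s)*(C*s)) ≤ 2*(A*s) ∧
    (s < 1 →
      -(K*s - 1) - Real.sqrt ((K*s - 1)^2 - 4*(A*s)*(C*s)) < 2*(A*s) ∧
      2*(A*s) < -(K*s - 1) + Real.sqrt ((K*s - 1)^2 - 4*(A*s)*(C*s))) := by
  have hKs : K*s ≤ K := by nlinarith [mul_nonneg hK.le (sub_nonneg.mpr hs1)]
  have hb : K*s - 1 < 0 := by nlinarith
  have h1 : A + C ≤ 1 - K*s := by linarith
  have h2 : (A + C)^2 ≤ (1 - K*s)^2 := by nlinarith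
  have h3 : 4*(A*s)*(C*s) ≤ 4*(A*C) := by
    nlinarith [mul_nonneg (mul_pos hA hC).le (show (0:ℝ) ≤ 1 - s^2 by nlinarith)]
  have h4 : 4*(A*C) < (A+C)^2 := by nlinarith [mul_pos (sub_pos.mpr hAC) (sub_pos.mpr hAC)]
  have hΔ : 0 < (K*s - 1)^2 - 4*(A*s)*(C*s) := by nlinarith
  set D := Real.sqrt ((K*s - 1)^2 - 4*(A*s)*(C*s)) with hDdef
  have hD0 : 0 < D := Real.sqrt_pos.mpr hΔ
  have hD2 : D^2 = (K*s - 1)^2 - 4*(A*s)*(C*s) := Real.sq_sqrt hΔ.le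
  have ht : D^2 - (-(K*s - 1) - 2*(A*s))^2 = 4*(A*s)*(1-s) := by
    rw [hD2]; linear_combination (-4*A*s^2) * hsum
  refine ⟨hΔ, ?_, ?_, ?_⟩
  · nlinarith [hD0, hD2, mul_pos (mul_pos hA hs0) (mul_pos hC hs0)]
  · nlinarith [ht, hD0, sq_nonneg (D - (-(K*s - 1) - 2*(A*s))),
      mul_nonneg (mul_pos hA hs0).le (sub_nonneg.mpr hs1)]
  · intro hslt
    have hpos : 0 < 4*(A*s)*(1-s) := by
      have h5 : 0 < 1 - s := by linarith
      positivity
    constructor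
    · nlinarith [ht, hD0, hpos, sq_nonneg (D - (-(K*s - 1) - 2*(A*s)))]
    · nlinarith [ht, hD0, hpos, sq_nonneg (D - (2*(A*s) + (K*s - 1)))]

/-- properties of the two branches `x_0(y)` and `x_1(y)` of the
kernel on `[-1,1]`. -/
theorem branches_properties
    (p q mh ml : ℝ)
    (hp : p ∈ Set.Ioo (0:ℝ) 1) (hq : q ∈ Set.Ioo (0:ℝ) 1)
    (hmh : mh ∈ Set.Ioo (0:ℝ) 1) (hml : ml ∈ Set.Ioo (0:ℝ) 1)
    (hpar : p + q + mh + ml = 1)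
    (hrho : p / mh + q / ml < 1)
    (a b c Delta x0 x1 : ℝ → ℝ)
    (ha : ∀ y, a y = p*(1-mh)*(q*y + 1 - q))
    (hb : ∀ y, b y = (p*mh + (1-p)*(1-mh))*(q*y + 1 - q) - 1)
    (hc : ∀ y, c y = (1-p)*mh*(q*y + 1 - q))
    (hDelta : ∀ y, Delta y = (b y)^2 - 4 * a y * c y)
    (hx0 : ∀ y, x0 y = (-(b y) - Real.sqrt (Delta y)) / (2 * a y))
    (hx1 : ∀ y, x1 y = (-(b y) + Real.sqrt (Delta y)) / (2 * a y)) :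
    (∀ y ∈ Set.Icc (-1:ℝ) 1,
        0 < Delta y ∧ x0 y < x1 y ∧ 0 < x0 y ∧ x0 y ≤ 1) ∧
    (0 < x0 0 ∧ x0 0 < 1 ∧ 1 < x1 0) := by
  obtain ⟨hp0, hp1⟩ := hp
  obtain ⟨hq0, hq1⟩ := hq
  obtain ⟨hmh0, hmh1⟩ := hmh
  obtain ⟨hml0, hml1⟩ := hml
  have hpm : p < mh := by
    have h1 : 0 < q / ml := div_pos hq0 hml0
    have h2 : p / mh < 1 := by linarith
    exact (div_lt_one hmh0).mp h2
  have hqm : q < ml := by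
    have h1 : 0 < p / mh := div_pos hp0 hmh0
    have h2 : q / ml < 1 := by linarith
    exact (div_lt_one hml0).mp h2
  have hq2 : q < 1/2 := by linarith
  have hA : 0 < p*(1-mh) := mul_pos hp0 (by linarith)
  have hC : 0 < (1-p)*mh := mul_pos (by linarith) hmh0
  have hK : 0 < p*mh + (1-p)*(1-mh) := by
    nlinarith [mul_pos hp0 hmh0,
      mul_pos (show (0:ℝ) < 1-p by linarith) (show (0:ℝ) < 1-mh by linarith)]
  have hsum : p*(1-mh) + (1-p)*mh + (p*mh + (1-p)*(1-mh)) = 1 := by ring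
  have hAC : p*(1-mh) < (1-p)*mh := by nlinarith
  have key : ∀ y : ℝ, 0 < q*y + 1 - q → q*y + 1 - q ≤ 1 →
      (0 < Delta y ∧ x0 y < x1 y ∧ 0 < x0 y ∧ x0 y ≤ 1) ∧
      (q*y + 1 - q < 1 → x0 y < 1 ∧ 1 < x1 y) := by
    intro y hs0 hs1
    obtain ⟨hΔ, hnum0, hnum1, hstrict⟩ :=
      quadAux (p*(1-mh)) ((1-p)*mh) (p*mh + (1-p)*(1-mh)) (q*y + 1 - q)
        hA hC hK hsum hAC hs0 hs1
    have hΔy : Delta y =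
        ((p*mh + (1-p)*(1-mh))*(q*y + 1 - q) - 1)^2 -
          4*(p*(1-mh)*(q*y + 1 - q))*((1-p)*mh*(q*y + 1 - q)) := by
      rw [hDelta, hb, ha, hc]
    have h2a : 0 < 2*(p*(1-mh)*(q*y + 1 - q)) := by
      have := mul_pos hA hs0; linarith
    have hD0 : 0 < Real.sqrt (((p*mh + (1-p)*(1-mh))*(q*y + 1 - q) - 1)^2 -
        4*(p*(1-mh)*(q*y + 1 - q))*((1-p)*mh*(q*y + 1 - q))) := Real.sqrt_pos.mpr hΔ
    have hx0y : x0 y = (-((p*mh + (1-p)*(1-mh))*(q*y + 1 - q) - 1) -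
        Real.sqrt (((p*mh + (1-p)*(1-mh))*(q*y + 1 - q) - 1)^2 -
          4*(p*(1-mh)*(q*y + 1 - q))*((1-p)*mh*(q*y + 1 - q)))) /
        (2*(p*(1-mh)*(q*y + 1 - q))) := by
      rw [hx0, hb, hΔy, ha]
    have hx1y : x1 y = (-((p*mh + (1-p)*(1-mh))*(q*y + 1 - q) - 1) +
        Real.sqrt (((p*mh + (1-p)*(1-mh))*(q*y + 1 - q) - 1)^2 -
          4*(p*(1-mh)*(q*y + 1 - q))*((1-p)*mh*(q*y + 1 - q)))) /
        (2*(p*(1-mh)*(q*y + 1 - q))) := by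
      rw [hx1, hb, hΔy, ha]
    refine ⟨⟨by rw [hΔy]; exact hΔ, ?_, ?_, ?_⟩, ?_⟩
    · rw [hx0y, hx1y]
      exact (div_lt_div_iff_of_pos_right h2a).mpr (by linarith)
    · rw [hx0y]; exact div_pos hnum0 h2a
    · rw [hx0y]; exact (div_le_one h2a).mpr hnum1
    · intro hslt
      obtain ⟨hs1', hs2'⟩ := hstrict hslt
      exact ⟨by rw [hx0y]; exact (div_lt_one h2a).mpr hs1',
             by rw [hx1y]; exact (one_lt_div h2a).mpr hs2'⟩
  constructor
  · intro y hy
    have h1 : 0 ≤ q*(y+1) := mul_nonneg hq0.le (by linarith [hy.1])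
    have h2 : 0 ≤ q*(1-y) := mul_nonneg hq0.le (by linarith [hy.2])
    have hs0 : 0 < q*y + 1 - q := by nlinarith
    have hs1 : q*y + 1 - q ≤ 1 := by nlinarith
    exact (key y hs0 hs1).1
  · have hs0 : 0 < q*0 + 1 - q := by nlinarith
    have hs1 : q*0 + 1 - q ≤ 1 := by nlinarith
    obtain ⟨⟨_, _, hx0pos, _⟩, hstr⟩ := key 0 hs0 hs1
    have h := hstr (by nlinarith)
    exact ⟨hx0pos, h.1, h.2⟩
end

section
/- One has 0 < r_0 < 1, and for every i ≥ 0 the boundary probabilities are exactly geometric: pi_{i,0} = pi_{0,0}·r_0^i. -/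
/-!
Along the boundary `j = 0` the balance equations are the second-order recurrence
`C π(n+2) - A π(n+1) + B π n = 0` with `A = B + C + q`. Its characteristic polynomial
`C x² - A x + B` is negative at `x = 1`, so its roots satisfy `0 < r₀ < 1 < r₁`; and `x1_0` is
the larger root of the reversed polynomial `B x² - A x + C`, so `r_0 = 1 / x1_0 = r₀`. Writing the recurrence as
`π(n+2) - r₀ π(n+1) = r₁ (π(n+1) - r₀ π n)`, the differences `π(n+1) - r₀ π n` grow like `r₁ⁿ`,
while summability forces them to tend to `0`; hence they vanish and `π n 0 = π 0 0 r₀ⁿ`.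
-/

open Filter Topology

section Recurrence

variable {𝕜 : Type*} [NormedField 𝕜]

theorem eq_zero_of_tendsto_zero_of_succ_eq_mul {v : ℕ → 𝕜} {t : 𝕜} (ht : 1 ≤ ‖t‖)
    (hv : ∀ n, v (n + 1) = t * v n) (hlim : Tendsto v atTop (𝓝 0)) (n : ℕ) : v n = 0 := by
  have hpow : ∀ n, v n = t ^ n * v 0 := by
    intro n
    induction n with
    | zero => simp
    | succ n ih => rw [hv, ih, pow_succ']; ring
  have hle : ∀ n, ‖v 0‖ ≤ ‖v n‖ := fun n => by
    rw [hpow n, norm_mul, norm_pow]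
    exact le_mul_of_one_le_left (norm_nonneg (v 0)) (one_le_pow₀ ht)
  have hnorm : Tendsto (fun n => ‖v n‖) atTop (𝓝 0) := by simpa using hlim.norm
  have h0 : v 0 = 0 := norm_le_zero_iff.mp (ge_of_tendsto' hnorm hle)
  rw [hpow n, h0, mul_zero]

theorem eq_mul_pow_of_tendsto_zero_of_recurrence {u : ℕ → 𝕜} {r t : 𝕜} (ht : 1 ≤ ‖t‖)
    (hrec : ∀ n, u (n + 2) = (r + t) * u (n + 1) - r * t * u n)
    (hlim : Tendsto u atTop (𝓝 0)) (n : ℕ) : u n = u 0 * r ^ n := by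
  have hdiff : ∀ n, u (n + 1) - r * u n = 0 :=
    eq_zero_of_tendsto_zero_of_succ_eq_mul (v := fun n => u (n + 1) - r * u n) ht
      (fun n => by simp only [hrec]; ring)
      (by simpa using (hlim.comp (tendsto_add_atTop_nat 1)).sub (hlim.const_mul r))
  induction n with
  | zero => simp
  | succ n ih => linear_combination hdiff n + r * ih

end Recurrence

theorem quadratic_roots_pos_lt_one_lt {a b c s : ℝ} (hb : 0 < b) (hc : 0 < c) (hq : b + c < a)
    (hs : 0 ≤ s) (hs2 : s ^ 2 = a ^ 2 - 4 * b * c) :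
    0 < (a - s) / (2 * c) ∧ (a - s) / (2 * c) < 1 ∧ 1 < (a + s) / (2 * c) := by
  have hsa : s < a := by nlinarith [mul_pos hb hc]
  -- `c x² - a x + b` is negative at `x = 1`, so `1` lies strictly between the roots
  have hcenter : |a - 2 * c| < s := abs_lt_of_sq_lt_sq (by nlinarith) hs
  obtain ⟨hlo, hhi⟩ := abs_lt.mp hcenter
  refine ⟨div_pos (by linarith) (by linarith), ?_, ?_⟩
  · rw [div_lt_one (by linarith)]; linarith
  · rw [one_lt_div (by linarith)]; linarith

theorem BalanceEquations.boundary_recurrence {p q mh ml : ℝ} {pi : ℕ → ℕ → ℝ}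
    (h : BalanceEquations p q mh ml pi) (n : ℕ) :
    (1-p)*(1-q)*mh * pi (n+2) 0 =
      (1 - ((1-p)*(1-q)*(1-mh) + p*(1-q)*mh)) * pi (n+1) 0 - p*(1-q)*(1-mh) * pi n 0 := by
  have := h.2.1 (n + 1) (by omega)
  simp only [Nat.add_sub_cancel] at this
  linarith

theorem boundary_geometric_general
    (p q mh ml : ℝ)
    (hp : p ∈ Set.Ioo (0:ℝ) 1) (hq : q ∈ Set.Ioo (0:ℝ) 1)
    (hmh : mh ∈ Set.Ioo (0:ℝ) 1)
    (Delta : ℝ → ℝ)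
    (hDelta : ∀ y, Delta y = ((p*mh + (1-p)*(1-mh))*(q*y + 1 - q) - 1)^2
        - 4 * (p*(1-mh)*(q*y + 1 - q)) * ((1-p)*mh*(q*y + 1 - q)))
    (x10 r0 : ℝ)
    (hx10 : x10 = (1 - (p*mh + (1-p)*(1-mh))*(1-q) + Real.sqrt (Delta 0))
        / (2*p*(1-mh)*(1-q)))
    (hr0 : r0 = 1 / x10)
    (pi : ℕ → ℕ → ℝ)
    (hsum : HasSum (fun ij : ℕ × ℕ => pi ij.1 ij.2) 1)
    (hbal : BalanceEquations p q mh ml pi) :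
    0 < r0 ∧ r0 < 1 ∧ ∀ i : ℕ, pi i 0 = pi 0 0 * r0 ^ i := by
  obtain ⟨hp0, hp1⟩ := hp
  obtain ⟨hq0, hq1⟩ := hq
  obtain ⟨hmh0, hmh1⟩ := hmh
  set A := 1 - ((1-p)*(1-q)*(1-mh) + p*(1-q)*mh)
  set B := p*(1-q)*(1-mh)
  set C := (1-p)*(1-q)*mh
  have hBpos : 0 < B := mul_pos (mul_pos hp0 (by linarith)) (by linarith)
  have hCpos : 0 < C := mul_pos (mul_pos (by linarith) (by linarith)) hmh0
  have hABC : A = B + C + q := by ring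
  have hdisc : Delta 0 = A ^ 2 - 4 * B * C := by rw [hDelta]; ring
  set s := √(Delta 0)
  have hs2 : s ^ 2 = A ^ 2 - 4 * B * C := by
    rw [Real.sq_sqrt (by nlinarith [sq_nonneg (B - C)]), hdisc]
  have hs : 0 ≤ s := Real.sqrt_nonneg _
  have hr0' : r0 = (A - s) / (2 * C) := by
    rw [hr0, hx10, one_div_div, div_eq_div_iff (by nlinarith) (by positivity)]
    linear_combination hs2
  obtain ⟨hr0pos, hr0lt, hr1gt⟩ :=
    quadratic_roots_pos_lt_one_lt hBpos hCpos (by linarith) hs hs2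
  have hrec : ∀ n, pi (n + 2) 0 =
      ((A - s) / (2 * C) + (A + s) / (2 * C)) * pi (n + 1) 0
        - (A - s) / (2 * C) * ((A + s) / (2 * C)) * pi n 0 := fun n => by
    field_simp
    linear_combination (4 * C) * hbal.boundary_recurrence n - pi n 0 * hs2
  have hlim : Tendsto (fun n => pi n 0) atTop (𝓝 0) :=
    (hsum.summable.comp_injective (Prod.mk_left_injective 0)).tendsto_atTop_zero
  refine ⟨hr0' ▸ hr0pos, hr0' ▸ hr0lt, fun i => ?_⟩
  rw [hr0']
  exact eq_mul_pow_of_tendsto_zero_of_recurrence (hr1gt.le.trans (Real.le_norm_self _)) hrec hlim i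

/-- the boundary probabilities `pi_{i,0}` are exactly geometric
with ratio `r_0 ∈ (0,1)`. -/
theorem boundary_geometric
    (p q mh ml : ℝ)
    (hp : p ∈ Set.Ioo (0:ℝ) 1) (hq : q ∈ Set.Ioo (0:ℝ) 1)
    (hmh : mh ∈ Set.Ioo (0:ℝ) 1) (hml : ml ∈ Set.Ioo (0:ℝ) 1)
    (hpar : p + q + mh + ml = 1)
    (hrho : p / mh + q / ml < 1)
    (Delta : ℝ → ℝ)
    (hDelta : ∀ y, Delta y = ((p*mh + (1-p)*(1-mh))*(q*y + 1 - q) - 1)^2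
        - 4 * (p*(1-mh)*(q*y + 1 - q)) * ((1-p)*mh*(q*y + 1 - q)))
    (x10 r0 : ℝ)
    (hx10 : x10 = (1 - (p*mh + (1-p)*(1-mh))*(1-q) + Real.sqrt (Delta 0))
        / (2*p*(1-mh)*(1-q)))
    (hr0 : r0 = 1 / x10)
    (pi : ℕ → ℕ → ℝ)
    (hnn : ∀ i j : ℕ, 0 ≤ pi i j)
    (hsum : HasSum (fun ij : ℕ × ℕ => pi ij.1 ij.2) 1)
    (hbal : BalanceEquations p q mh ml pi) :
    0 < r0 ∧ r0 < 1 ∧ ∀ i : ℕ, pi i 0 = pi 0 0 * r0 ^ i :=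
  boundary_geometric_general p q mh ml hp hq hmh Delta hDelta x10 r0 hx10 hr0 pi hsum hbal
end

section
/- The probability of an empty system is pi_{0,0} = (1 − rho)/((1−p)(1−q)). -/
/-- the probability of an empty system. -/
theorem empty_system_probability
    (p q mh ml : ℝ)
    (hp : p ∈ Set.Ioo (0:ℝ) 1) (hq : q ∈ Set.Ioo (0:ℝ) 1)
    (hmh : mh ∈ Set.Ioo (0:ℝ) 1) (hml : ml ∈ Set.Ioo (0:ℝ) 1)
    (hpar : p + q + mh + ml = 1)
    (hrho : p / mh + q / ml < 1)
    (pi : ℕ → ℕ → ℝ)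
    (hnn : ∀ i j : ℕ, 0 ≤ pi i j)
    (hsum : HasSum (fun ij : ℕ × ℕ => pi ij.1 ij.2) 1)
    (hbal : BalanceEquations p q mh ml pi) :
    pi 0 0 = (1 - (p / mh + q / ml)) / ((1-p)*(1-q)) := by
  obtain ⟨hp0, hp1⟩ := hp
  obtain ⟨hq0, hq1⟩ := hq
  obtain ⟨hmh0, hmh1⟩ := hmh
  obtain ⟨hml0, hml1⟩ := hml
  obtain ⟨e00, eI0, e0J, eIJ⟩ := hbal
  have hp1' : (0:ℝ) < 1 - p := by linarith
  have hq1' : (0:ℝ) < 1 - q := by linarith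
  have hmh1' : (0:ℝ) < 1 - mh := by linarith
  -- summability facts
  have hSf : Summable (fun ij : ℕ × ℕ => pi ij.1 ij.2) := hsum.summable
  have hrowS : ∀ a, Summable (fun j => pi a j) := fun a => hSf.prod_factor a
  have hsum2 : HasSum (fun ij : ℕ × ℕ => pi ij.2 ij.1) 1 :=
    (Equiv.prodComm ℕ ℕ).hasSum_iff.mpr hsum
  have hcolS : ∀ b, Summable (fun i => pi i b) := fun b => hsum2.summable.prod_factor b
  set P : ℕ → ℝ := fun a => ∑' j, pi a j with hPdef
  set R : ℕ → ℝ := fun b => ∑' i, pi i b with hRdef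
  have hPsum : HasSum P 1 := hsum.prod_fiberwise fun a => (hrowS a).hasSum
  have hRsum : HasSum R 1 := hsum2.prod_fiberwise fun b => (hcolS b).hasSum
  have hrow0 : ∀ a, HasSum (fun j => pi a j) (P a) := fun a => (hrowS a).hasSum
  have hcol0 : ∀ b, HasSum (fun i => pi i b) (R b) := fun b => (hcolS b).hasSum
  have hrow1 : ∀ a, HasSum (fun j => pi a (j+1)) (P a - pi a 0) := by
    intro a
    have h := (hasSum_nat_add_iff' (f := fun j => pi a j) 1).mpr (hrow0 a)
    simpa using h
  have hcol1 : ∀ b, HasSum (fun i => pi (i+1) b) (R b - pi 0 b) := by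
    intro b
    have h := (hasSum_nat_add_iff' (f := fun i => pi i b) 1).mpr (hcol0 b)
    simpa using h
  have hcol2 : ∀ b, HasSum (fun i => pi (i+2) b) (R b - (pi 0 b + pi 1 b)) := by
    intro b
    have h := (hasSum_nat_add_iff' (f := fun i => pi i b) 2).mpr (hcol0 b)
    simpa [Finset.sum_range_succ] using h
  -- high priority marginal recurrence
  have hstep : ∀ i : ℕ, (p*(1-mh) + (1-p)*mh) * P (i+1)
      = p*(1-mh) * P i + (1-p)*mh * P (i+2) := by
    intro i
    have hL : HasSum (fun j => (1 - ((1-p)*(1-q)*(1-mh) + p*(1-q)*mh)) * pi (i+1) (j+1))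
        ((1 - ((1-p)*(1-q)*(1-mh) + p*(1-q)*mh)) * (P (i+1) - pi (i+1) 0)) :=
      (hrow1 (i+1)).mul_left _
    have hR : HasSum (fun j =>
        p*(1-q)*(1-mh) * pi i (j+1) + (1-p)*(1-q)*mh * pi (i+2) (j+1) +
        (1-p)*q*mh * pi (i+2) j + (p*q*mh + (1-p)*q*(1-mh)) * pi (i+1) j +
        p*q*(1-mh) * pi i j)
        (p*(1-q)*(1-mh) * (P i - pi i 0) + (1-p)*(1-q)*mh * (P (i+2) - pi (i+2) 0) +
        (1-p)*q*mh * P (i+2) + (p*q*mh + (1-p)*q*(1-mh)) * P (i+1) +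
        p*q*(1-mh) * P i) :=
      ((((((hrow1 i).mul_left _).add ((hrow1 (i+2)).mul_left _)).add
        ((hrow0 (i+2)).mul_left _)).add ((hrow0 (i+1)).mul_left _)).add
        ((hrow0 i).mul_left _))
    have hfun : (fun j => (1 - ((1-p)*(1-q)*(1-mh) + p*(1-q)*mh)) * pi (i+1) (j+1))
        = (fun j =>
        p*(1-q)*(1-mh) * pi i (j+1) + (1-p)*(1-q)*mh * pi (i+2) (j+1) +
        (1-p)*q*mh * pi (i+2) j + (p*q*mh + (1-p)*q*(1-mh)) * pi (i+1) j +
        p*q*(1-mh) * pi i j) := by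
      funext j
      have h := eIJ (i+1) (j+1) (Nat.le_add_left 1 i) (Nat.le_add_left 1 j)
      simpa using h
    rw [hfun] at hL
    have E1 := hL.unique hR
    have E2 := eI0 (i+1) (Nat.le_add_left 1 i)
    simp only [Nat.add_sub_cancel] at E2
    linear_combination E1 + E2
  -- the invariant F j = q * R j - (1-p)*ml*((1-q)*pi 0 (j+1) + q * pi 0 j)
  have hF0 : q * R 0 - (1-p)*ml*((1-q)*pi 0 1 + q * pi 0 0) = 0 := by
    have hL : HasSum (fun i => (1 - ((1-p)*(1-q)*(1-mh) + p*(1-q)*mh)) * pi (i+1) 0)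
        ((1 - ((1-p)*(1-q)*(1-mh) + p*(1-q)*mh)) * (R 0 - pi 0 0)) :=
      (hcol1 0).mul_left _
    have hR2 : HasSum (fun i => p*(1-q)*(1-mh) * pi i 0 + (1-p)*(1-q)*mh * pi (i+2) 0)
        (p*(1-q)*(1-mh) * R 0 + (1-p)*(1-q)*mh * (R 0 - (pi 0 0 + pi 1 0))) :=
      ((hcol0 0).mul_left _).add ((hcol2 0).mul_left _)
    have hfun : (fun i => (1 - ((1-p)*(1-q)*(1-mh) + p*(1-q)*mh)) * pi (i+1) 0)
        = (fun i => p*(1-q)*(1-mh) * pi i 0 + (1-p)*(1-q)*mh * pi (i+2) 0) := by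
      funext i
      have h := eI0 (i+1) (Nat.le_add_left 1 i)
      simpa using h
    rw [hfun] at hL
    have E5 := hL.unique hR2
    linear_combination E5 + e00
  have hFstep : ∀ j : ℕ,
      q * R (j+1) - (1-p)*ml*((1-q)*pi 0 (j+2) + q * pi 0 (j+1))
      = q * R j - (1-p)*ml*((1-q)*pi 0 (j+1) + q * pi 0 j) := by
    intro j
    have hL : HasSum (fun i => (1 - ((1-p)*(1-q)*(1-mh) + p*(1-q)*mh)) * pi (i+1) (j+1))
        ((1 - ((1-p)*(1-q)*(1-mh) + p*(1-q)*mh)) * (R (j+1) - pi 0 (j+1))) :=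
      (hcol1 (j+1)).mul_left _
    have hR2 : HasSum (fun i =>
        p*(1-q)*(1-mh) * pi i (j+1) + (1-p)*(1-q)*mh * pi (i+2) (j+1) +
        (1-p)*q*mh * pi (i+2) j + (p*q*mh + (1-p)*q*(1-mh)) * pi (i+1) j +
        p*q*(1-mh) * pi i j)
        (p*(1-q)*(1-mh) * R (j+1) + (1-p)*(1-q)*mh * (R (j+1) - (pi 0 (j+1) + pi 1 (j+1))) +
        (1-p)*q*mh * (R j - (pi 0 j + pi 1 j)) + (p*q*mh + (1-p)*q*(1-mh)) * (R j - pi 0 j) +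
        p*q*(1-mh) * R j) :=
      ((((((hcol0 (j+1)).mul_left _).add ((hcol2 (j+1)).mul_left _)).add
        ((hcol2 j).mul_left _)).add ((hcol1 j).mul_left _)).add
        ((hcol0 j).mul_left _))
    have hfun : (fun i => (1 - ((1-p)*(1-q)*(1-mh) + p*(1-q)*mh)) * pi (i+1) (j+1))
        = (fun i =>
        p*(1-q)*(1-mh) * pi i (j+1) + (1-p)*(1-q)*mh * pi (i+2) (j+1) +
        (1-p)*q*mh * pi (i+2) j + (p*q*mh + (1-p)*q*(1-mh)) * pi (i+1) j +
        p*q*(1-mh) * pi i j) := by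
      funext i
      have h := eIJ (i+1) (j+1) (Nat.le_add_left 1 i) (Nat.le_add_left 1 j)
      simpa using h
    rw [hfun] at hL
    have E3 := hL.unique hR2
    have E4 := e0J (j+1) (Nat.le_add_left 1 j)
    simp only [Nat.add_sub_cancel] at E4
    linear_combination E3 + E4
  have hFall : ∀ j : ℕ, q * R j - (1-p)*ml*((1-q)*pi 0 (j+1) + q * pi 0 j) = 0 := by
    intro j
    induction j with
    | zero => exact hF0
    | succ n ih => rw [hFstep n]; exact ih
  -- summing the invariant
  have hFsum : HasSum (fun j => q * R j - (1-p)*ml*((1-q)*pi 0 (j+1) + q * pi 0 j))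
      (q * 1 - (1-p)*ml*((1-q)*(P 0 - pi 0 0) + q * P 0)) :=
    (hRsum.mul_left q).sub
      ((((hrow1 0).mul_left (1-q)).add ((hrow0 0).mul_left q)).mul_left ((1-p)*ml))
  have hFzero : HasSum (fun j : ℕ => q * R j - (1-p)*ml*((1-q)*pi 0 (j+1) + q * pi 0 j))
      (0:ℝ) := by
    have h : (fun j : ℕ => q * R j - (1-p)*ml*((1-q)*pi 0 (j+1) + q * pi 0 j))
        = fun _ => (0:ℝ) := funext hFall
    rw [h]; exact hasSum_zero
  have E7 := hFsum.unique hFzero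
  -- the geometric high-priority marginal
  have hPtend : Filter.Tendsto P Filter.atTop (nhds 0) := hPsum.summable.tendsto_atTop_zero
  have hDconst : ∀ i, (1-p)*mh*P (i+1) - p*(1-mh)*P i = (1-p)*mh*P 1 - p*(1-mh)*P 0 := by
    intro i
    induction i with
    | zero => rfl
    | succ n ih => linear_combination ih - hstep n
  have hDtend : Filter.Tendsto (fun i => (1-p)*mh*P (i+1) - p*(1-mh)*P i)
      Filter.atTop (nhds 0) := by
    have h1 : Filter.Tendsto (fun i => P (i+1)) Filter.atTop (nhds 0) :=
      hPtend.comp (Filter.tendsto_add_atTop_nat 1)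
    have h2 := (h1.const_mul ((1-p)*mh)).sub (hPtend.const_mul (p*(1-mh)))
    simpa using h2
  have hD0 : (1-p)*mh*P 1 - p*(1-mh)*P 0 = 0 := by
    have h2 : Filter.Tendsto (fun i => (1-p)*mh*P (i+1) - p*(1-mh)*P i)
        Filter.atTop (nhds ((1-p)*mh*P 1 - p*(1-mh)*P 0)) := by
      simp only [hDconst]; exact tendsto_const_nhds
    exact tendsto_nhds_unique h2 hDtend
  have hDall : ∀ i, (1-p)*mh*P (i+1) = p*(1-mh)*P i := by
    intro i
    have h := hDconst i
    linarith
  have hmhne : mh ≠ 0 := ne_of_gt hmh0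
  have hmlne : ml ≠ 0 := ne_of_gt hml0
  have hpne : (1:ℝ) - p ≠ 0 := ne_of_gt hp1'
  have hqne : (1:ℝ) - q ≠ 0 := ne_of_gt hq1'
  set r : ℝ := p*(1-mh)/((1-p)*mh) with hr
  have hrpos : 0 < r := div_pos (mul_pos hp0 hmh1') (mul_pos hp1' hmh0)
  have hpm : p < mh := by
    have hq' : 0 < q / ml := div_pos hq0 hml0
    have : p / mh < 1 := by linarith
    exact (div_lt_one hmh0).mp this
  have hr1 : r < 1 := by
    rw [hr, div_lt_one (mul_pos hp1' hmh0)]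
    nlinarith
  have hgeo : ∀ i, P i = r ^ i * P 0 := by
    intro i
    induction i with
    | zero => simp
    | succ n ih =>
      have h : P (n+1) = r * P n := by
        rw [hr]
        field_simp
        linear_combination hDall n
      rw [h, ih, pow_succ]
      ring
  have hgsum : HasSum (fun i => r^i * P 0) ((1-r)⁻¹ * P 0) :=
    (hasSum_geometric_of_lt_one (le_of_lt hrpos) hr1).mul_right (P 0)
  have hPsum' : HasSum (fun i => r^i * P 0) 1 := by
    have h : (fun i => r^i * P 0) = P := funext fun i => (hgeo i).symm
    rw [h]; exact hPsum
  have hP0 : (1-r)⁻¹ * P 0 = 1 := hgsum.unique hPsum'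
  have h1r : (1:ℝ) - r ≠ 0 := by
    have : (0:ℝ) < 1 - r := by linarith
    exact ne_of_gt this
  have hP0eq : P 0 = 1 - r := by
    field_simp at hP0
    linarith
  have hP0' : (1-p)*mh*P 0 = mh - p := by
    rw [hP0eq, hr]
    field_simp
    ring
  have E7' : (1-p)*(1-q)*ml*pi 0 0 = (1-p)*ml*P 0 - q := by
    linear_combination E7
  have hfinal : (1-p)*(1-q)*ml*mh*pi 0 0 = ml*(mh-p) - q*mh := by
    linear_combination mh*E7' + ml*hP0'
  have hne : (1-p)*(1-q) ≠ 0 := mul_ne_zero hpne hqne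
  rw [eq_div_iff hne]
  field_simp
  linear_combination hfinal
end

section
/- Assume mu_l ≤ mu_h. Then eta_1 and eta_2 are real with eta_2 < 0 < eta_1 < 1, for every real y one has f(y) = −(1−p)(1−q)·mu_l^2·(1−eta_1·y)(1−eta_2·y), and f(1) = mu_l·mu_h·(rho − 1) < 0. -/
/-!
Write `f y = A y^2 + mu_l B y - k mu_l^2` with `k = (1-p)(1-q)` and `A = (mu_h - (1-p) mu_l)(1-mu_l) q`.
Then `eta_1, eta_2` are the roots of `k mu_l^2 x^2 - mu_l B x - A`, which gives the factorization
by Vieta. Since `mu_l ≤ mu_h`, `A > 0`, so the discriminant exceeds `B^2` and the roots have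
opposite signs. Expanding, `f 1 = p mu_l + q mu_h - mu_l mu_h = mu_l mu_h (rho - 1) < 0`; as
`1 - eta_2 > 0`, the factorization at `y = 1` then forces `1 - eta_1 > 0`.
-/

section ReversedRoots

variable {k m A B : ℝ}

theorem quadratic_eq_neg_mul_one_sub_mul_one_sub (hk : k ≠ 0) (hm : m ≠ 0)
    (hD : 0 ≤ B ^ 2 + 4 * k * A) (y : ℝ) :
    A * y ^ 2 + m * B * y - k * m ^ 2 =
      -(k * m ^ 2) * (1 - (B + √(B ^ 2 + 4 * k * A)) / (2 * k * m) * y)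
        * (1 - (B - √(B ^ 2 + 4 * k * A)) / (2 * k * m) * y) := by
  have hs := Real.sq_sqrt hD
  set s := √(B ^ 2 + 4 * k * A)
  field_simp
  linear_combination (-y ^ 2) * hs

theorem abs_lt_sqrt_sq_add_mul (hkA : 0 < k * A) : |B| < √(B ^ 2 + 4 * k * A) := by
  have hD : 0 ≤ B ^ 2 + 4 * k * A := by nlinarith [sq_nonneg B]
  refine abs_lt_of_sq_lt_sq ?_ (Real.sqrt_nonneg _)
  rw [Real.sq_sqrt hD]
  linarith

theorem sub_sqrt_div_neg (hk : 0 < k) (hm : 0 < m) (hA : 0 < A) :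
    (B - √(B ^ 2 + 4 * k * A)) / (2 * k * m) < 0 := by
  have := (abs_lt.mp (abs_lt_sqrt_sq_add_mul (B := B) (mul_pos hk hA))).2
  exact div_neg_of_neg_of_pos (by linarith) (by positivity)

theorem add_sqrt_div_pos (hk : 0 < k) (hm : 0 < m) (hA : 0 < A) :
    0 < (B + √(B ^ 2 + 4 * k * A)) / (2 * k * m) := by
  have := (abs_lt.mp (abs_lt_sqrt_sq_add_mul (B := B) (mul_pos hk hA))).1
  exact div_pos (by linarith) (by positivity)

end ReversedRoots

theorem lt_one_of_neg_mul_one_sub_mul_one_sub_neg {C η₁ η₂ : ℝ} (hC : 0 < C) (hη₂ : η₂ < 0)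
    (h : -C * (1 - η₁) * (1 - η₂) < 0) : η₁ < 1 := by
  have hpos : 0 < C * (1 - η₂) * (1 - η₁) := by linarith
  linarith [pos_of_mul_pos_right hpos (mul_pos hC (by linarith)).le]

theorem eta_properties_general
    (p q mh ml : ℝ)
    (hp : p ∈ Set.Ioo (0:ℝ) 1) (hq : q ∈ Set.Ioo (0:ℝ) 1)
    (hmh : mh ∈ Set.Ioo (0:ℝ) 1) (hml : ml ∈ Set.Ioo (0:ℝ) 1)
    (hrho : p / mh + q / ml < 1)
    (hmu : ml ≤ mh)
    (f : ℝ → ℝ)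
    (hf : ∀ y, f y = (mh - (1-p)*ml)*(1-ml)*q*y^2
        + ml*(1 - mh*(1-q) - (1-p)*(1-q)*(1-ml) - (1-p)*q*ml)*y
        - (1-p)*(1-q)*ml^2)
    (eta1 eta2 : ℝ)
    (heta1 : eta1 = ((1 - mh*(1-q) - (1-p)*(1-q)*(1-ml) - (1-p)*q*ml)
        + Real.sqrt ((1 - mh*(1-q) - (1-p)*(1-q)*(1-ml) - (1-p)*q*ml)^2
            + 4*(1-p)*(1-q)*(mh - (1-p)*ml)*(1-ml)*q))
        / (2*(1-p)*(1-q)*ml))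
    (heta2 : eta2 = ((1 - mh*(1-q) - (1-p)*(1-q)*(1-ml) - (1-p)*q*ml)
        - Real.sqrt ((1 - mh*(1-q) - (1-p)*(1-q)*(1-ml) - (1-p)*q*ml)^2
            + 4*(1-p)*(1-q)*(mh - (1-p)*ml)*(1-ml)*q))
        / (2*(1-p)*(1-q)*ml)) :
    eta2 < 0 ∧ 0 < eta1 ∧ eta1 < 1 ∧
    (∀ y : ℝ, f y = -((1-p)*(1-q)*ml^2) * (1 - eta1*y) * (1 - eta2*y)) ∧
    f 1 = ml*mh*((p / mh + q / ml) - 1) ∧ f 1 < 0 := by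
  obtain ⟨hp0, hp1⟩ := hp
  obtain ⟨hq0, hq1⟩ := hq
  obtain ⟨hmh0, -⟩ := hmh
  obtain ⟨hml0, hml1⟩ := hml
  set B := 1 - mh*(1-q) - (1-p)*(1-q)*(1-ml) - (1-p)*q*ml
  set k := (1-p)*(1-q)
  set A := (mh - (1-p)*ml)*(1-ml)*q
  have hk : 0 < k := mul_pos (by linarith) (by linarith)
  have hA : 0 < A := mul_pos (mul_pos (by nlinarith [mul_pos hp0 hml0]) (by linarith)) hq0
  have hdisc : B^2 + 4*(1-p)*(1-q)*(mh - (1-p)*ml)*(1-ml)*q = B^2 + 4*k*A := by ring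
  have hden : 2*(1-p)*(1-q)*ml = 2*k*ml := by ring
  rw [hdisc, hden] at heta1 heta2
  have hfactor (y : ℝ) : f y = -(k*ml^2) * (1 - eta1*y) * (1 - eta2*y) := by
    rw [hf, heta1, heta2]
    exact quadratic_eq_neg_mul_one_sub_mul_one_sub hk.ne' hml0.ne'
      (by nlinarith [sq_nonneg B, mul_pos hk hA]) y
  have heta2_neg : eta2 < 0 := heta2 ▸ sub_sqrt_div_neg hk hml0 hA
  have hf1 : f 1 = ml*mh*((p / mh + q / ml) - 1) := by
    rw [hf]
    field_simp
    ring
  have hf1_neg : f 1 < 0 := hf1 ▸ mul_neg_of_pos_of_neg (by positivity) (by linarith)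
  refine ⟨heta2_neg, heta1 ▸ add_sqrt_div_pos hk hml0 hA, ?_, hfactor, hf1, hf1_neg⟩
  exact lt_one_of_neg_mul_one_sub_mul_one_sub_neg (mul_pos hk (pow_pos hml0 2)) heta2_neg
    (by simpa only [hfactor, mul_one] using hf1_neg)

/-- properties of the roots `eta_1, eta_2` of `f`. -/
theorem eta_properties
    (p q mh ml : ℝ)
    (hp : p ∈ Set.Ioo (0:ℝ) 1) (hq : q ∈ Set.Ioo (0:ℝ) 1)
    (hmh : mh ∈ Set.Ioo (0:ℝ) 1) (hml : ml ∈ Set.Ioo (0:ℝ) 1)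
    (hpar : p + q + mh + ml = 1)
    (hrho : p / mh + q / ml < 1)
    (hmu : ml ≤ mh)
    (f : ℝ → ℝ)
    (hf : ∀ y, f y = (mh - (1-p)*ml)*(1-ml)*q*y^2
        + ml*(1 - mh*(1-q) - (1-p)*(1-q)*(1-ml) - (1-p)*q*ml)*y
        - (1-p)*(1-q)*ml^2)
    (eta1 eta2 : ℝ)
    (heta1 : eta1 = ((1 - mh*(1-q) - (1-p)*(1-q)*(1-ml) - (1-p)*q*ml)
        + Real.sqrt ((1 - mh*(1-q) - (1-p)*(1-q)*(1-ml) - (1-p)*q*ml)^2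
            + 4*(1-p)*(1-q)*(mh - (1-p)*ml)*(1-ml)*q))
        / (2*(1-p)*(1-q)*ml))
    (heta2 : eta2 = ((1 - mh*(1-q) - (1-p)*(1-q)*(1-ml) - (1-p)*q*ml)
        - Real.sqrt ((1 - mh*(1-q) - (1-p)*(1-q)*(1-ml) - (1-p)*q*ml)^2
            + 4*(1-p)*(1-q)*(mh - (1-p)*ml)*(1-ml)*q))
        / (2*(1-p)*(1-q)*ml)) :
    eta2 < 0 ∧ 0 < eta1 ∧ eta1 < 1 ∧
    (∀ y : ℝ, f y = -((1-p)*(1-q)*ml^2) * (1 - eta1*y) * (1 - eta2*y)) ∧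
    f 1 = ml*mh*((p / mh + q / ml) - 1) ∧ f 1 < 0 :=
  eta_properties_general p q mh ml hp hq hmh hml hrho hmu f hf eta1 eta2 heta1 heta2
end

section
/- The function T(y) = F(y) − y·sqrt(Delta(y)) is differentiable at y = 1 with derivative T'(1) = −2·(1−p)·mu_l·(1−rho)/(1−rho_h); in particular T'(1) < 0. -/
/-!
Since `ρ_h < 1` forces `p < μ_h`, one gets `Δ(1) = (μ_h - p)² > 0`, so `√Δ` is differentiable
at `1` and the chain rule gives `T'(1) = F'(1) - √Δ(1) - Δ'(1) / (2 √Δ(1))`. Eliminating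
`μ_l = 1 - p - q - μ_h` reduces this to the closed form, which is negative because `ρ < 1`.
-/

theorem hasDerivAt_quadratic (a b c x : ℝ) :
    HasDerivAt (fun y => a * y ^ 2 + b * y + c) (2 * a * x + b) x :=
  ((((hasDerivAt_pow 2 x).const_mul a).add ((hasDerivAt_id' x).const_mul b)).add_const c)
    |>.congr_deriv (by ring)

theorem HasDerivAt.sub_mul_sqrt {f D : ℝ → ℝ} {f' D' x : ℝ}
    (hf : HasDerivAt f f' x) (hD : HasDerivAt D D' x) (hx : D x ≠ 0) :
    HasDerivAt (fun y => f y - y * √(D y)) (f' - (√(D x) + x * (D' / (2 * √(D x))))) x :=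
  (hf.sub ((hasDerivAt_id' x).mul (hD.sqrt hx))).congr_deriv (by ring)

-- The left side is `F'(1) - √Δ(1) - Δ'(1) / (2 √Δ(1))` with `√Δ(1) = mh - p`.
theorem T_deriv_at_one_eq {p q mh ml : ℝ} (hmh : mh ≠ 0) (hml : ml ≠ 0) (hp_mh : mh - p ≠ 0)
    (hpar : p + q + mh + ml = 1) :
    ((1 - p) + mh - 2 * (1 - p) * ml) * (1 + q) + 2 * (1 - p) * q * ml - 1 - (mh - p)
        - q * ((p * mh - (1 - p) * (1 - mh)) ^ 2 - (p * mh + (1 - p) * (1 - mh))) / (mh - p)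
      = -(2 * (1 - p) * ml * (1 - (p / mh + q / ml)) / (1 - p / mh)) := by
  obtain rfl : ml = 1 - p - q - mh := by linarith
  have h1 : 1 - p / mh ≠ 0 := by rwa [one_sub_div hmh, div_ne_zero_iff, and_iff_left hmh]
  field_simp
  ring

/-- `T(y) = F(y) − y·sqrt(Delta(y))` is differentiable at `y = 1`
with derivative `T'(1) = −2(1−p)·mu_l·(1−rho)/(1−rho_h) < 0`. -/
theorem T_deriv_at_one
    (p q mh ml : ℝ)
    (hp : p ∈ Set.Ioo (0:ℝ) 1) (hq : q ∈ Set.Ioo (0:ℝ) 1)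
    (hmh : mh ∈ Set.Ioo (0:ℝ) 1) (hml : ml ∈ Set.Ioo (0:ℝ) 1)
    (hpar : p + q + mh + ml = 1)
    (hrho : p / mh + q / ml < 1)
    (Delta F T : ℝ → ℝ)
    (hDelta : ∀ y, Delta y = (p*mh - (1-p)*(1-mh))^2*(q*y + 1 - q)^2
        - 2*(p*mh + (1-p)*(1-mh))*(q*y + 1 - q) + 1)
    (hF : ∀ y, F y = ((1-p) + mh - 2*(1-p)*ml)*q*y^2
        + (((1-p) + mh - 2*(1-p)*ml)*(1-q) + 2*(1-p)*q*ml - 1)*y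
        + 2*(1-p)*(1-q)*ml)
    (hT : ∀ y, T y = F y - y * Real.sqrt (Delta y)) :
    HasDerivAt T (-(2*(1-p)*ml*(1 - (p/mh + q/ml)) / (1 - p/mh))) 1 ∧
    -(2*(1-p)*ml*(1 - (p/mh + q/ml)) / (1 - p/mh)) < 0 := by
  have hrho_h : p / mh < 1 := by linarith [div_pos hq.1 hml.1]
  have hp_lt : p < mh := by linarith [(div_lt_one hmh.1).mp hrho_h]
  have hs : 0 < mh - p := sub_pos.2 hp_lt
  have hΔ1 : Delta 1 = (mh - p) ^ 2 := by
    rw [hDelta]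
    ring
  have hsqrt : √(Delta 1) = mh - p := by rw [hΔ1, Real.sqrt_sq hs.le]
  have hΔ : HasDerivAt Delta (2 * q * ((p*mh - (1-p)*(1-mh))^2 - (p*mh + (1-p)*(1-mh)))) 1 := by
    have hu : HasDerivAt (fun y => q * y + 1 - q) q 1 := by
      simpa using (((hasDerivAt_id' 1).const_mul q).add_const 1).sub_const q
    rw [show Delta = (fun u => (p*mh - (1-p)*(1-mh))^2 * u^2 + -(2 * (p*mh + (1-p)*(1-mh))) * u + 1)
        ∘ (fun y => q * y + 1 - q) from funext fun y => by simp only [hDelta, Function.comp_apply]; ring]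
    exact ((hasDerivAt_quadratic _ _ _ _).comp 1 hu).congr_deriv (by ring)
  have hF' : HasDerivAt F (((1-p) + mh - 2*(1-p)*ml) * (1 + q) + 2*(1-p)*q*ml - 1) 1 := by
    rw [funext hF]
    exact (hasDerivAt_quadratic _ _ _ 1).congr_deriv (by ring)
  have hT' := hF'.sub_mul_sqrt hΔ (by rw [hΔ1]; exact pow_ne_zero 2 hs.ne')
  rw [← funext hT, hsqrt] at hT'
  refine ⟨hT'.congr_deriv ?_, neg_neg_of_pos (div_pos ?_ (by linarith))⟩
  · rw [← T_deriv_at_one_eq hmh.1.ne' hml.1.ne' hs.ne' hpar]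
    field_simp [hs.ne']
    ring
  exact mul_pos (mul_pos (mul_pos two_pos (sub_pos.2 hp.2)) hml.1) (by linarith)
end

section
/- Assume mu_l ≤ mu_h and F(y_0) > 0. Then 1 < 1/eta_1 < y_0, T(1/eta_1) = 0, and T*(1/eta_1) ≠ 0. -/
/-!
Put `A = (1-p)(1-q)μ_l`, `B = 1 - μ_h(1-q) - (1-p)(1-q)(1-μ_l) - (1-p)qμ_l` and
`C = (1-p)(1-q)(μ_h - (1-p)μ_l)(1-μ_l)q`. Then `η₁` is the positive root of `A²x² - ABx - C`,
so `Y = 1/η₁` is a root of `Q(y) = Cy² + ABy - A²`; moreover `Y > 1`, because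
`A² - AB - C = (1-p)(1-q)μ_hμ_l(1 - ρ) > 0`. Everything rests on the polynomial identity
`(1-q)(F(y)² - y²Δ(y)) = 4(y-1)(qy+1-q)Q(y)`.

In the variable `s = qy + 1 - q`, with `u = pμ_h` and `v = (1-p)(1-μ_h)`, the discriminant
factors as `Δ = ((√u+√v)²s - 1)((√u-√v)²s - 1)`. The branch point `y₀` corresponds to its smaller
root `s = 1/(√u+√v)²`, so `Δ > 0` left of `y₀`, and `y₀ > 1` because `√u + √v < 1` (Cauchy–Schwarz,
strict since `p < μ_h`). At `y₀` the identity shows that `F(y₀) > 0` forces `Q(y₀) > 0`, i.e.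
`Y < y₀`. On `[Y, y₀)` it gives `F² ≥ y²Δ > 0`, so `F` has no zero on `[Y, y₀]` and is positive at
`Y`. Finally `Q(Y) = 0` gives `F(Y)² = Y²Δ(Y)`, hence `Y√Δ(Y) = F(Y)`: `T(Y) = 0` and
`T*(Y) = 2F(Y) > 0`.
-/

open Real Set

namespace KeyLemma

def disc (u v s : ℝ) : ℝ := (u - v) ^ 2 * s ^ 2 - 2 * (u + v) * s + 1

noncomputable def branch (u v : ℝ) : ℝ := (u + v - 2 * √(u * v)) / (u - v) ^ 2

noncomputable def quadRoot (A B C : ℝ) : ℝ := (B + √(B ^ 2 + 4 * C)) / (2 * A)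

def quad (A B C y : ℝ) : ℝ := C * y ^ 2 + A * B * y - A ^ 2

theorem pos_of_forall_ne_zero {f : ℝ → ℝ} {a b : ℝ} (hf : ContinuousOn f (Icc a b)) (hab : a ≤ b)
    (hb : 0 < f b) (hne : ∀ x ∈ Icc a b, f x ≠ 0) : 0 < f a := by
  by_contra! ha
  obtain ⟨x, hx, hfx⟩ := intermediate_value_Icc hab hf ⟨ha, hb.le⟩
  exact hne x hx hfx

theorem mul_sqrt_eq_of_sq_eq {y f d : ℝ} (hy : 0 ≤ y) (hf : 0 ≤ f) (h : f ^ 2 = y ^ 2 * d) :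
    y * √d = f := by
  rw [← sqrt_sq hy, ← sqrt_mul (sq_nonneg y), ← h, sqrt_sq hf]

section Disc

variable {u v : ℝ}

theorem disc_eq_mul (hu : 0 ≤ u) (hv : 0 ≤ v) (s : ℝ) :
    disc u v s = ((√u + √v) ^ 2 * s - 1) * ((√u - √v) ^ 2 * s - 1) := by
  obtain ⟨a, ha, rfl⟩ : ∃ a, 0 ≤ a ∧ u = a ^ 2 :=
    ⟨√u, sqrt_nonneg u, (sq_sqrt hu).symm⟩
  obtain ⟨b, hb, rfl⟩ : ∃ b, 0 ≤ b ∧ v = b ^ 2 :=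
    ⟨√v, sqrt_nonneg v, (sq_sqrt hv).symm⟩
  rw [disc, sqrt_sq ha, sqrt_sq hb]
  ring

theorem branch_eq (hu : 0 ≤ u) (hv : 0 ≤ v) (huv : u ≠ v) :
    branch u v = 1 / (√u + √v) ^ 2 := by
  obtain ⟨a, ha, rfl⟩ : ∃ a, 0 ≤ a ∧ u = a ^ 2 :=
    ⟨√u, sqrt_nonneg u, (sq_sqrt hu).symm⟩
  obtain ⟨b, hb, rfl⟩ : ∃ b, 0 ≤ b ∧ v = b ^ 2 :=
    ⟨√v, sqrt_nonneg v, (sq_sqrt hv).symm⟩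
  have hab : a - b ≠ 0 := sub_ne_zero.2 fun h ↦ huv (by rw [h])
  have hab' : a + b ≠ 0 := by intro h; apply hab; linarith
  rw [branch, sqrt_sq ha, sqrt_sq hb, ← mul_pow, sqrt_sq (mul_nonneg ha hb)]
  field_simp
  ring

theorem sq_sqrt_add_sqrt_mul_branch (hu : 0 ≤ u) (hv : 0 ≤ v) (huv : u ≠ v) :
    (√u + √v) ^ 2 * branch u v = 1 := by
  have : (√u + √v) ^ 2 ≠ 0 := by
    intro h
    apply huv
    have ha := sqrt_nonneg u
    have hb := sqrt_nonneg v
    rw [← sq_sqrt hu, ← sq_sqrt hv]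
    nlinarith
  rw [branch_eq hu hv huv, mul_one_div_cancel this]

theorem disc_branch (hu : 0 ≤ u) (hv : 0 ≤ v) (huv : u ≠ v) : disc u v (branch u v) = 0 := by
  rw [disc_eq_mul hu hv, sq_sqrt_add_sqrt_mul_branch hu hv huv, sub_self, zero_mul]

/-- Below the smaller root `branch u v`, both linear factors of `disc_eq_mul` are negative. -/
theorem disc_pos_of_lt_branch (hu : 0 ≤ u) (hv : 0 ≤ v) (huv : u ≠ v) {s : ℝ}
    (hs : s < branch u v) : 0 < disc u v s := by
  have hbr := sq_sqrt_add_sqrt_mul_branch hu hv huv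
  have ha := sqrt_nonneg u
  have hb := sqrt_nonneg v
  have hsum : (√u + √v) ^ 2 * s < 1 := by
    rw [← hbr]
    exact mul_lt_mul_of_pos_left hs (lt_of_le_of_ne (sq_nonneg _) fun h ↦ by simp [← h] at hbr)
  have hdiff : (√u - √v) ^ 2 * s < 1 := by
    rcases le_or_gt s 0 with h | h
    · nlinarith [sq_nonneg (√u - √v)]
    · nlinarith [mul_nonneg ha hb]
  rw [disc_eq_mul hu hv]
  nlinarith

end Disc

/-- The Cauchy–Schwarz inequality for the unit vectors `(√p, √(1-p))` and `(√m, √(1-m))`,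
strict because they are not parallel. -/
theorem sqrt_mul_add_sqrt_mul_lt_one {p m : ℝ} (hp0 : 0 ≤ p) (hp1 : p ≤ 1) (hm0 : 0 ≤ m)
    (hm1 : m ≤ 1) (hpm : p ≠ m) : √(p * m) + √((1 - p) * (1 - m)) < 1 := by
  rw [sqrt_mul hp0, sqrt_mul (by linarith)]
  have hα := sq_sqrt hp0
  have hβ := sq_sqrt hm0
  have hγ := sq_sqrt (by linarith : 0 ≤ 1 - p)
  have hδ := sq_sqrt (by linarith : 0 ≤ 1 - m)
  have hne : √p * √(1 - m) - √m * √(1 - p) ≠ 0 := by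
    intro h
    apply hpm
    have h2 : (√p * √(1 - m)) ^ 2 = (√m * √(1 - p)) ^ 2 := by rw [sub_eq_zero.1 h]
    rw [mul_pow, mul_pow, hα, hβ, hγ, hδ] at h2
    linarith
  have hlagrange : (√p * √m + √(1 - p) * √(1 - m)) ^ 2
      + (√p * √(1 - m) - √m * √(1 - p)) ^ 2 = 1 := by
    linear_combination (√m ^ 2 + √(1 - m) ^ 2) * (hα + hγ) + hβ + hδ
  have hsq : (√p * √m + √(1 - p) * √(1 - m)) ^ 2 < 1 ^ 2 := by
    linarith [pow_two_pos_of_ne_zero hne]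
  exact lt_of_pow_lt_pow_left₀ 2 zero_le_one hsq

theorem one_lt_branch {p m : ℝ} (hp0 : 0 < p) (hp1 : p < 1) (hm0 : 0 < m) (hm1 : m < 1)
    (hpm : p ≠ m) (huv : p * m ≠ (1 - p) * (1 - m)) : 1 < branch (p * m) ((1 - p) * (1 - m)) := by
  have hu : 0 < p * m := by positivity
  have hv : 0 < (1 - p) * (1 - m) := mul_pos (by linarith) (by linarith)
  have hlt := sqrt_mul_add_sqrt_mul_lt_one hp0.le hp1.le hm0.le hm1.le hpm
  rw [branch_eq hu.le hv.le huv, lt_div_iff₀ (by positivity), one_mul]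
  nlinarith [sqrt_pos.2 hu, sqrt_pos.2 hv]

section Quadratic

variable {A B C : ℝ}

theorem quadRoot_isRoot (hA : A ≠ 0) (hd : 0 ≤ B ^ 2 + 4 * C) :
    A ^ 2 * quadRoot A B C ^ 2 - A * B * quadRoot A B C - C = 0 := by
  have hsq : (2 * A * quadRoot A B C - B) ^ 2 = B ^ 2 + 4 * C := by
    rw [quadRoot, mul_div_cancel₀ _ (by positivity), add_sub_cancel_left, sq_sqrt hd]
  linear_combination hsq / 4

theorem quadRoot_pos (hA : 0 < A) (hC : 0 < C) : 0 < quadRoot A B C := by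
  have : |B| < √(B ^ 2 + 4 * C) := by
    rw [← sqrt_sq_eq_abs]; exact sqrt_lt_sqrt (sq_nonneg B) (by linarith)
  exact div_pos (by linarith [neg_abs_le B]) (by positivity)

theorem quadRoot_lt_one (hA : 0 < A) (hC : 0 < C) (hE : 0 < A ^ 2 - A * B - C) :
    quadRoot A B C < 1 := by
  have hη := quadRoot_pos (B := B) hA hC
  have hroot := quadRoot_isRoot (B := B) (C := C) hA.ne' (by nlinarith [sq_nonneg B])
  by_contra! h
  -- the root equation reads `η (A² - AB - C) = (1 - η)(A²η + C)`
  nlinarith [mul_le_mul_of_nonneg_left h (by positivity : (0 : ℝ) ≤ A ^ 2 * quadRoot A B C + C)]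

theorem quad_one_div_quadRoot (hA : 0 < A) (hC : 0 < C) :
    quad A B C (1 / quadRoot A B C) = 0 := by
  have hη := (quadRoot_pos (B := B) hA hC).ne'
  have hroot := quadRoot_isRoot (B := B) (C := C) hA.ne' (by nlinarith [sq_nonneg B])
  rw [quad]; field_simp; linear_combination -hroot

theorem quad_sub_quad (r Y : ℝ) :
    quad A B C r - quad A B C Y = (r - Y) * (C * (r + Y) + A * B) := by
  rw [quad, quad]; ring

variable {Y r : ℝ}

theorem quad_slope_pos (hC : 0 < C) (hE : 0 < A ^ 2 - A * B - C) (hY : 1 < Y)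
    (hQY : quad A B C Y = 0) (hr : 1 ≤ r) : 0 < C * (r + Y) + A * B := by
  have h := quad_sub_quad (A := A) (B := B) (C := C) 1 Y
  rw [hQY, quad] at h
  have h1 : 0 < C * (1 + Y) + A * B :=
    pos_of_mul_pos_right (a := Y - 1) (by linear_combination (-1 : ℝ) * h + hE) (by linarith)
  nlinarith

theorem lt_of_quad_pos (hC : 0 < C) (hE : 0 < A ^ 2 - A * B - C) (hY : 1 < Y)
    (hQY : quad A B C Y = 0) (hr : 1 ≤ r) (hQr : 0 < quad A B C r) : Y < r := by
  have h := quad_sub_quad (A := A) (B := B) (C := C) r Y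
  rw [hQY, sub_zero] at h
  by_contra! hrY
  nlinarith [quad_slope_pos hC hE hY hQY hr]

theorem quad_nonneg_of_le (hC : 0 < C) (hE : 0 < A ^ 2 - A * B - C) (hY : 1 < Y)
    (hQY : quad A B C Y = 0) (hr : Y ≤ r) : 0 ≤ quad A B C r := by
  have h := quad_sub_quad (A := A) (B := B) (C := C) r Y
  rw [hQY, sub_zero] at h
  rw [h]
  exact mul_nonneg (sub_nonneg.2 hr) (quad_slope_pos hC hE hY hQY (by linarith)).le

end Quadratic

def delta (p q mh y : ℝ) : ℝ := disc (p * mh) ((1 - p) * (1 - mh)) (q * y + 1 - q)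

noncomputable def branchPoint (p q mh : ℝ) : ℝ :=
  (p * mh + (1 - p) * (1 - mh) - 2 * √(p * mh * (1 - p) * (1 - mh)))
    / ((p * mh - (1 - p) * (1 - mh)) ^ 2 * q) - (1 - q) / q

def coeffA (p q ml : ℝ) : ℝ := (1 - p) * (1 - q) * ml

def coeffB (p q mh ml : ℝ) : ℝ :=
  1 - mh * (1 - q) - (1 - p) * (1 - q) * (1 - ml) - (1 - p) * q * ml

def coeffC (p q mh ml : ℝ) : ℝ := (1 - p) * (1 - q) * (mh - (1 - p) * ml) * (1 - ml) * q

def Fpoly (p q mh ml y : ℝ) : ℝ :=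
  (1 - p + mh - 2 * (1 - p) * ml) * q * y ^ 2
    + ((1 - p + mh - 2 * (1 - p) * ml) * (1 - q) + 2 * (1 - p) * q * ml - 1) * y
    + 2 * (1 - p) * (1 - q) * ml

section BranchPoint

variable {p q mh : ℝ}

theorem shift_branchPoint (hq : q ≠ 0) (huv : p * mh ≠ (1 - p) * (1 - mh)) :
    q * branchPoint p q mh + 1 - q = branch (p * mh) ((1 - p) * (1 - mh)) := by
  have : p * mh - (1 - p) * (1 - mh) ≠ 0 := sub_ne_zero.2 huv
  rw [branchPoint, branch, mul_assoc (p * mh)]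
  field_simp
  ring

theorem one_lt_branchPoint (hp0 : 0 < p) (hp1 : p < 1) (hq : 0 < q) (hmh0 : 0 < mh) (hmh1 : mh < 1)
    (hpm : p ≠ mh) (huv : p * mh ≠ (1 - p) * (1 - mh)) : 1 < branchPoint p q mh := by
  have h := one_lt_branch hp0 hp1 hmh0 hmh1 hpm huv
  rw [← shift_branchPoint hq.ne' huv] at h
  by_contra! h'
  linarith [mul_le_mul_of_nonneg_left h' hq.le]

theorem delta_branchPoint (hp0 : 0 ≤ p) (hp1 : p ≤ 1) (hq : q ≠ 0) (hmh0 : 0 ≤ mh) (hmh1 : mh ≤ 1)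
    (huv : p * mh ≠ (1 - p) * (1 - mh)) : delta p q mh (branchPoint p q mh) = 0 := by
  rw [delta, shift_branchPoint hq huv]
  exact disc_branch (mul_nonneg hp0 hmh0) (mul_nonneg (by linarith) (by linarith)) huv

theorem delta_pos_of_lt_branchPoint (hp0 : 0 ≤ p) (hp1 : p ≤ 1) (hq : 0 < q) (hmh0 : 0 ≤ mh)
    (hmh1 : mh ≤ 1) (huv : p * mh ≠ (1 - p) * (1 - mh)) {y : ℝ} (hy : y < branchPoint p q mh) :
    0 < delta p q mh y := by
  refine disc_pos_of_lt_branch (mul_nonneg hp0 hmh0) (mul_nonneg (by linarith) (by linarith)) huv ?_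
  rw [← shift_branchPoint hq.ne' huv]
  linarith [mul_lt_mul_of_pos_left hy hq]

end BranchPoint

theorem key_identity (p q mh ml y : ℝ) :
    (1 - q) * (Fpoly p q mh ml y ^ 2 - y ^ 2 * delta p q mh y)
      = 4 * (y - 1) * (q * y + 1 - q)
        * quad (coeffA p q ml) (coeffB p q mh ml) (coeffC p q mh ml) y := by
  rw [Fpoly, delta, disc, quad, coeffA, coeffB, coeffC]
  ring

section Parameters

variable {p q mh ml : ℝ}

theorem coeffA_pos (hp : p < 1) (hq : q < 1) (hml : 0 < ml) : 0 < coeffA p q ml :=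
  mul_pos (mul_pos (by linarith) (by linarith)) hml

theorem coeffC_pos (hp0 : 0 < p) (hp1 : p < 1) (hq0 : 0 < q) (hq1 : q < 1) (hml0 : 0 < ml)
    (hml1 : ml < 1) (hmu : ml ≤ mh) : 0 < coeffC p q mh ml := by
  have : 0 < mh - (1 - p) * ml := by nlinarith
  have : 0 < 1 - p := by linarith
  have : 0 < 1 - q := by linarith
  have : 0 < 1 - ml := by linarith
  unfold coeffC
  positivity

theorem coeffA_sq_sub_pos (hp : p < 1) (hq : q < 1) (hmh : 0 < mh) (hml : 0 < ml)
    (hrho : p / mh + q / ml < 1) :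
    0 < coeffA p q ml ^ 2 - coeffA p q ml * coeffB p q mh ml - coeffC p q mh ml := by
  rw [div_add_div _ _ hmh.ne' hml.ne', div_lt_one (by positivity)] at hrho
  have h : coeffA p q ml ^ 2 - coeffA p q ml * coeffB p q mh ml - coeffC p q mh ml
      = (1 - p) * (1 - q) * (mh * ml - (p * ml + mh * q)) := by
    rw [coeffA, coeffB, coeffC]; ring
  rw [h]
  exact mul_pos (mul_pos (by linarith) (by linarith)) (by linarith)

theorem quad_pos_of_delta_eq_zero (hq0 : 0 ≤ q) (hq1 : q < 1) {y : ℝ} (hy : 1 < y)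
    (hΔ : delta p q mh y = 0) (hF : 0 < Fpoly p q mh ml y) :
    0 < quad (coeffA p q ml) (coeffB p q mh ml) (coeffC p q mh ml) y := by
  have h := key_identity p q mh ml y
  rw [hΔ, mul_zero, sub_zero] at h
  refine pos_of_mul_pos_right (h ▸ mul_pos (by linarith) (pow_pos hF 2)) ?_
  exact mul_nonneg (mul_nonneg zero_le_four (by linarith)) (by nlinarith)

theorem Fpoly_ne_zero (hq0 : 0 ≤ q) (hq1 : q < 1) {y : ℝ} (hy : 1 < y)
    (hΔ : 0 < delta p q mh y)
    (hQ : 0 ≤ quad (coeffA p q ml) (coeffB p q mh ml) (coeffC p q mh ml) y) :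
    Fpoly p q mh ml y ≠ 0 := by
  intro hF
  have h := key_identity p q mh ml y
  rw [hF] at h
  have hs : 0 ≤ q * y + 1 - q := by nlinarith
  nlinarith [mul_pos (mul_pos (sub_pos.2 hq1) (pow_pos (by linarith : 0 < y) 2)) hΔ,
    mul_nonneg (mul_nonneg (sub_nonneg.2 hy.le) hs) hQ]

theorem Fpoly_pos_of_quad_eq_zero (hp0 : 0 ≤ p) (hp1 : p ≤ 1) (hq0 : 0 < q) (hq1 : q < 1)
    (hmh0 : 0 ≤ mh) (hmh1 : mh ≤ 1) (huv : p * mh ≠ (1 - p) * (1 - mh))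
    (hC : 0 < coeffC p q mh ml)
    (hE : 0 < coeffA p q ml ^ 2 - coeffA p q ml * coeffB p q mh ml - coeffC p q mh ml)
    {Y : ℝ} (hY1 : 1 < Y) (hQY : quad (coeffA p q ml) (coeffB p q mh ml) (coeffC p q mh ml) Y = 0)
    (hY : Y ≤ branchPoint p q mh) (hF : 0 < Fpoly p q mh ml (branchPoint p q mh)) :
    0 < Fpoly p q mh ml Y := by
  refine pos_of_forall_ne_zero (by unfold Fpoly; fun_prop) hY hF fun r ⟨hYr, hr⟩ ↦ ?_
  rcases hr.lt_or_eq with hlt | rfl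
  · exact Fpoly_ne_zero hq0.le hq1 (hY1.trans_le hYr)
      (delta_pos_of_lt_branchPoint hp0 hp1 hq0 hmh0 hmh1 huv hlt)
      (quad_nonneg_of_le hC hE hY1 hQY hYr)
  · exact hF.ne'

theorem Fpoly_sq_eq_of_quad_eq_zero (hq : q ≠ 1) {y : ℝ}
    (hQ : quad (coeffA p q ml) (coeffB p q mh ml) (coeffC p q mh ml) y = 0) :
    Fpoly p q mh ml y ^ 2 = y ^ 2 * delta p q mh y := by
  have h := key_identity p q mh ml y
  rw [hQ, mul_zero, mul_eq_zero, sub_eq_zero, sub_eq_zero] at h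
  exact h.resolve_left hq.symm

end Parameters

end KeyLemma

open KeyLemma

/-- Key Lemma case. -/
theorem key_lemma_pos
    (p q mh ml : ℝ)
    (hp : p ∈ Set.Ioo (0:ℝ) 1) (hq : q ∈ Set.Ioo (0:ℝ) 1)
    (hmh : mh ∈ Set.Ioo (0:ℝ) 1) (hml : ml ∈ Set.Ioo (0:ℝ) 1)
    (hpar : p + q + mh + ml = 1)
    (hrho : p / mh + q / ml < 1)
    (hmu : ml ≤ mh)
    (Delta F T Tstar : ℝ → ℝ)
    (hDelta : ∀ y, Delta y = (p*mh - (1-p)*(1-mh))^2*(q*y + 1 - q)^2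
        - 2*(p*mh + (1-p)*(1-mh))*(q*y + 1 - q) + 1)
    (hF : ∀ y, F y = ((1-p) + mh - 2*(1-p)*ml)*q*y^2
        + (((1-p) + mh - 2*(1-p)*ml)*(1-q) + 2*(1-p)*q*ml - 1)*y
        + 2*(1-p)*(1-q)*ml)
    (hT : ∀ y, T y = F y - y * Real.sqrt (Delta y))
    (hTstar : ∀ y, Tstar y = F y + y * Real.sqrt (Delta y))
    (y0 : ℝ)
    (hy0 : y0 = (p*mh + (1-p)*(1-mh) - 2*Real.sqrt (p*mh*(1-p)*(1-mh)))
        / ((p*mh - (1-p)*(1-mh))^2 * q) - (1-q)/q)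
    (eta1 : ℝ)
    (heta1 : eta1 = ((1 - mh*(1-q) - (1-p)*(1-q)*(1-ml) - (1-p)*q*ml)
        + Real.sqrt ((1 - mh*(1-q) - (1-p)*(1-q)*(1-ml) - (1-p)*q*ml)^2
            + 4*(1-p)*(1-q)*(mh - (1-p)*ml)*(1-ml)*q))
        / (2*(1-p)*(1-q)*ml))
    (hFy0 : 0 < F y0) :
    1 < 1/eta1 ∧ 1/eta1 < y0 ∧ T (1/eta1) = 0 ∧ Tstar (1/eta1) ≠ 0 := by
  obtain ⟨hp0, hp1⟩ := hp
  obtain ⟨hq0, hq1⟩ := hq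
  obtain ⟨hmh0, hmh1⟩ := hmh
  obtain ⟨hml0, hml1⟩ := hml
  obtain rfl : F = Fpoly p q mh ml := funext hF
  obtain rfl : Delta = delta p q mh := funext hDelta
  obtain rfl : y0 = branchPoint p q mh := hy0
  obtain rfl : eta1 = quadRoot (coeffA p q ml) (coeffB p q mh ml) (coeffC p q mh ml) := by
    rw [heta1, quadRoot, coeffA, coeffB, coeffC]; ring_nf
  have hpm : p < mh := (div_lt_one hmh0).1 (by linarith [div_pos hq0 hml0])
  have huv : p * mh ≠ (1 - p) * (1 - mh) := by
    intro h; linarith [(by linear_combination hpar - h : q + ml = 0)]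
  have hA := coeffA_pos hp1 hq1 hml0
  have hC := coeffC_pos hp0 hp1 hq0 hq1 hml0 hml1 hmu
  have hE := coeffA_sq_sub_pos hp1 hq1 hmh0 hml0 hrho
  have hy01 := one_lt_branchPoint hp0 hp1 hq0 hmh0 hmh1 hpm.ne huv
  have hY1 := one_lt_one_div (quadRoot_pos hA hC) (quadRoot_lt_one hA hC hE)
  have hQY := quad_one_div_quadRoot (B := coeffB p q mh ml) hA hC
  have hYy0 := lt_of_quad_pos hC hE hY1 hQY hy01.le <| quad_pos_of_delta_eq_zero hq0.le hq1 hy01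
    (delta_branchPoint hp0.le hp1.le hq0.ne' hmh0.le hmh1.le huv) hFy0
  have hFY := Fpoly_pos_of_quad_eq_zero hp0.le hp1.le hq0 hq1 hmh0.le hmh1.le huv hC hE hY1 hQY
    hYy0.le hFy0
  have hroot := mul_sqrt_eq_of_sq_eq (by linarith) hFY.le (Fpoly_sq_eq_of_quad_eq_zero hq1.ne hQY)
  refine ⟨hY1, hYy0, ?_, ?_⟩
  · rw [hT, hroot, sub_self]
  · rw [hTstar, hroot]; positivity
end

section
/- Assume mu_l ≤ mu_h and F(y_0) = 0. Then 1/eta_1 = y_0 > 1 and T(y_0) = T*(y_0) = 0. -/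
set_option maxHeartbeats 2000000

/-- Key Lemma case. -/
theorem key_lemma_zero
    (p q mh ml : ℝ)
    (hp : p ∈ Set.Ioo (0:ℝ) 1) (hq : q ∈ Set.Ioo (0:ℝ) 1)
    (hmh : mh ∈ Set.Ioo (0:ℝ) 1) (hml : ml ∈ Set.Ioo (0:ℝ) 1)
    (hpar : p + q + mh + ml = 1)
    (hrho : p / mh + q / ml < 1)
    (hmu : ml ≤ mh)
    (Delta F T Tstar : ℝ → ℝ)
    (hDelta : ∀ y, Delta y = (p*mh - (1-p)*(1-mh))^2*(q*y + 1 - q)^2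
        - 2*(p*mh + (1-p)*(1-mh))*(q*y + 1 - q) + 1)
    (hF : ∀ y, F y = ((1-p) + mh - 2*(1-p)*ml)*q*y^2
        + (((1-p) + mh - 2*(1-p)*ml)*(1-q) + 2*(1-p)*q*ml - 1)*y
        + 2*(1-p)*(1-q)*ml)
    (hT : ∀ y, T y = F y - y * Real.sqrt (Delta y))
    (hTstar : ∀ y, Tstar y = F y + y * Real.sqrt (Delta y))
    (y0 : ℝ)
    (hy0 : y0 = (p*mh + (1-p)*(1-mh) - 2*Real.sqrt (p*mh*(1-p)*(1-mh)))
        / ((p*mh - (1-p)*(1-mh))^2 * q) - (1-q)/q)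
    (eta1 : ℝ)
    (heta1 : eta1 = ((1 - mh*(1-q) - (1-p)*(1-q)*(1-ml) - (1-p)*q*ml)
        + Real.sqrt ((1 - mh*(1-q) - (1-p)*(1-q)*(1-ml) - (1-p)*q*ml)^2
            + 4*(1-p)*(1-q)*(mh - (1-p)*ml)*(1-ml)*q))
        / (2*(1-p)*(1-q)*ml))
    (hFy0 : F y0 = 0) :
    1/eta1 = y0 ∧ 1 < y0 ∧ T y0 = 0 ∧ Tstar y0 = 0 := by
  obtain ⟨hp0, hp1⟩ := hp
  obtain ⟨hq0, hq1⟩ := hq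
  obtain ⟨hmh0, hmh1⟩ := hmh
  obtain ⟨hml0, hml1⟩ := hml
  have h1p : (0:ℝ) < 1 - p := by linarith
  have h1q : (0:ℝ) < 1 - q := by linarith
  have h1mh : (0:ℝ) < 1 - mh := by linarith
  have h1ml : (0:ℝ) < 1 - ml := by linarith
  -- p < mh
  have hpm : p < mh := by
    have h1 : 0 < q / ml := div_pos hq0 hml0
    have h2 : p / mh < 1 := by linarith only [h1, hrho]
    have h3 := (div_lt_one hmh0).mp h2
    linarith only [h3]
  -- nonzeroness of A = p*mh - (1-p)*(1-mh)
  have hAval : p*mh - (1-p)*(1-mh) = -(q+ml) := by linear_combination hpar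
  have hAne : p*mh - (1-p)*(1-mh) ≠ 0 := by
    rw [hAval]; exact ne_of_lt (by linarith only [hq0, hml0])
  have hA2pos : 0 < (p*mh - (1-p)*(1-mh))^2 :=
    (sq_nonneg _).lt_of_ne ((pow_ne_zero 2 hAne).symm)
  have hqne : q ≠ 0 := ne_of_gt hq0
  have hy0q : y0 = (p*mh + (1-p)*(1-mh) - 2*Real.sqrt (p*mh*(1-p)*(1-mh)))
        / ((p*mh - (1-p)*(1-mh))^2 * q) - (1-q)/q := hy0
  set s : ℝ := Real.sqrt (p*mh*(1-p)*(1-mh)) with hs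
  have hcpos : 0 < p*mh*(1-p)*(1-mh) :=
    mul_pos (mul_pos (mul_pos hp0 hmh0) h1p) h1mh
  have hs0 : 0 ≤ s := Real.sqrt_nonneg _
  have hs2 : s^2 = p*mh*(1-p)*(1-mh) := Real.sq_sqrt (le_of_lt hcpos)
  -- key algebraic form of y0
  have hz : (p*mh - (1-p)*(1-mh))^2 * (q*y0 + 1 - q)
      = p*mh + (1-p)*(1-mh) - 2*s := by
    rw [hy0q]
    field_simp
    ring
  -- Delta y0 = 0
  have hD0 : Delta y0 = 0 := by
    have h4 : (p*mh - (1-p)*(1-mh))^2 * Delta y0 = 0 := by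
      rw [hDelta]
      linear_combination ((p*mh - (1-p)*(1-mh))^2*(q*y0+1-q)
        - (p*mh + (1-p)*(1-mh)) - 2*s) * hz + 4*hs2
    exact (mul_eq_zero.mp h4).resolve_left (ne_of_gt hA2pos)
  -- T and Tstar vanish
  have hsqrt0 : Real.sqrt (Delta y0) = 0 := by rw [hD0, Real.sqrt_zero]
  have hT0 : T y0 = 0 := by rw [hT, hsqrt0, hFy0]; ring
  have hTs0 : Tstar y0 = 0 := by rw [hTstar, hsqrt0, hFy0]; ring
  -- y0 > 1
  have hup : (0:ℝ) < p*(1-mh) := mul_pos hp0 h1mh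
  have hvp : (0:ℝ) < (1-p)*mh := mul_pos h1p hmh0
  have hsplit : s = Real.sqrt (p*(1-mh)) * Real.sqrt ((1-p)*mh) := by
    rw [hs, show p*mh*(1-p)*(1-mh) = (p*(1-mh))*((1-p)*mh) from by ring,
      Real.sqrt_mul (le_of_lt hup)]
  have hu2 : (Real.sqrt (p*(1-mh)))^2 = p*(1-mh) := Real.sq_sqrt (le_of_lt hup)
  have hv2 : (Real.sqrt ((1-p)*mh))^2 = (1-p)*mh := Real.sq_sqrt (le_of_lt hvp)
  have huv : Real.sqrt (p*(1-mh)) ≠ Real.sqrt ((1-p)*mh) := by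
    intro h
    have h2 : p*(1-mh) = (1-p)*mh := by rw [← hu2, ← hv2, h]
    have h3 : p = mh := by linear_combination h2
    exact absurd h3 (ne_of_lt hpm)
  have hdsq : 0 < (Real.sqrt (p*(1-mh)) - Real.sqrt ((1-p)*mh))^2 :=
    (sq_nonneg _).lt_of_ne ((pow_ne_zero 2 (sub_ne_zero_of_ne huv)).symm)
  have h2s : 2*s < p*(1-mh) + (1-p)*mh := by
    rw [hsplit]
    have hexp : (Real.sqrt (p*(1-mh)) - Real.sqrt ((1-p)*mh))^2
        = (Real.sqrt (p*(1-mh)))^2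
          - 2*(Real.sqrt (p*(1-mh)) * Real.sqrt ((1-p)*mh))
          + (Real.sqrt ((1-p)*mh))^2 := by ring
    linarith only [hdsq, hu2, hv2, hexp]
  have hone : p*mh + (1-p)*(1-mh) + (p*(1-mh)+(1-p)*mh) = 1 := by ring
  have hBs1 : p*mh + (1-p)*(1-mh) + 2*s < 1 := by linarith only [hone, h2s]
  have hid : (p*mh + (1-p)*(1-mh) - 2*s)*(p*mh + (1-p)*(1-mh) + 2*s)
      = (p*mh - (1-p)*(1-mh))^2 := by
    linear_combination (-4)*hs2
  have hBpos : 0 < p*mh + (1-p)*(1-mh) :=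
    add_pos (mul_pos hp0 hmh0) (mul_pos h1p h1mh)
  have hBp : 0 < p*mh + (1-p)*(1-mh) + 2*s := by linarith only [hBpos, hs0]
  have hB2s_pos : 0 < p*mh + (1-p)*(1-mh) - 2*s := by nlinarith only [hid, hBp, hA2pos]
  have hBgtA : (p*mh - (1-p)*(1-mh))^2 < p*mh + (1-p)*(1-mh) - 2*s := by
    nlinarith only [hid, hBs1, hB2s_pos]
  have h1z : 1 < q*y0 + 1 - q := by
    have hlt : (p*mh - (1-p)*(1-mh))^2 * 1 < (p*mh - (1-p)*(1-mh))^2 * (q*y0 + 1 - q) := by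
      rw [mul_one, hz]; exact hBgtA
    exact (mul_lt_mul_iff_right₀ hA2pos).mp hlt
  have hy0gt1 : 1 < y0 := by
    have hqy : q * 1 < q * y0 := by linarith only [h1z]
    exact (mul_lt_mul_iff_right₀ hq0).mp hqy
  have hy0pos : 0 < y0 := by linarith only [hy0gt1]
  have hy0ne : y0 ≠ 0 := ne_of_gt hy0pos
  -- positivity facts
  have hmhm : 0 < mh - (1-p)*ml := by
    have hr : (1-p)*ml = ml - p*ml := by ring
    linarith only [mul_pos hp0 hml0, hr, hmu]
  have hEpos : 0 < (1-p)*(1-q)*ml := mul_pos (mul_pos h1p h1q) hml0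
  have hDppos : 0 < (1-p)*(1-q)*(mh - (1-p)*ml)*(1-ml)*q :=
    mul_pos (mul_pos (mul_pos (mul_pos h1p h1q) hmhm) h1ml) hq0
  -- the quadratic relation Q(y0) = 0
  have hF0 : ((1-p) + mh - 2*(1-p)*ml)*q*y0^2
      + (((1-p) + mh - 2*(1-p)*ml)*(1-q) + 2*(1-p)*q*ml - 1)*y0
      + 2*(1-p)*(1-q)*ml = 0 := by rw [← hF y0]; exact hFy0
  have hD0' : (p*mh - (1-p)*(1-mh))^2*(q*y0 + 1 - q)^2
      - 2*(p*mh + (1-p)*(1-mh))*(q*y0 + 1 - q) + 1 = 0 := by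
    rw [← hDelta y0]; exact hD0
  have hkey : ((1-p)*(1-q)*(mh - (1-p)*ml)*(1-ml)*q*y0^2
      + (1-p)*(1-q)*ml*(1 - mh*(1-q) - (1-p)*(1-q)*(1-ml) - (1-p)*q*ml)*y0
      - ((1-p)*(1-q)*ml)^2) * (4*((y0-1)*(q*y0+1-q))) = 0 := by
    linear_combination ((1-q) *
        (((1-p) + mh - 2*(1-p)*ml)*q*y0^2
          + (((1-p) + mh - 2*(1-p)*ml)*(1-q) + 2*(1-p)*q*ml - 1)*y0
          + 2*(1-p)*(1-q)*ml)) * hF0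
      - ((1-q) * y0^2) * hD0'
  have hMpos : 0 < 4*((y0-1)*(q*y0+1-q)) := by
    have h1 : 0 < y0 - 1 := by linarith only [hy0gt1]
    have h2 : 0 < q*y0+1-q := by linarith only [h1z]
    have h4 : (0:ℝ) < 4 := by norm_num
    exact mul_pos h4 (mul_pos h1 h2)
  have hQ : (1-p)*(1-q)*(mh - (1-p)*ml)*(1-ml)*q*y0^2
      + (1-p)*(1-q)*ml*(1 - mh*(1-q) - (1-p)*(1-q)*(1-ml) - (1-p)*q*ml)*y0
      - ((1-p)*(1-q)*ml)^2 = 0 :=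
    (mul_eq_zero.mp hkey).resolve_right (ne_of_gt hMpos)
  -- C*y0 < E
  have hEC : (1-p)*(1-q)*ml*((1-p)*(1-q)*ml
      - (1 - mh*(1-q) - (1-p)*(1-q)*(1-ml) - (1-p)*q*ml)*y0)
      = ((1-p)*(1-q)*(mh - (1-p)*ml)*(1-ml)*q)*y0^2 := by linear_combination -hQ
  have hprod : 0 < ((1-p)*(1-q)*(mh - (1-p)*ml)*(1-ml)*q)*y0^2 :=
    mul_pos hDppos (pow_pos hy0pos 2)
  have h3 : 0 < (1-p)*(1-q)*ml*((1-p)*(1-q)*ml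
      - (1 - mh*(1-q) - (1-p)*(1-q)*(1-ml) - (1-p)*q*ml)*y0) := hEC ▸ hprod
  have hX : 0 < (1-p)*(1-q)*ml - (1 - mh*(1-q) - (1-p)*(1-q)*(1-ml) - (1-p)*q*ml)*y0 := by
    by_contra hc
    push_neg at hc
    exact absurd h3 (not_lt.mpr (mul_nonpos_iff.mpr (Or.inl ⟨hEpos.le, hc⟩)))
  have hCy0 : (1 - mh*(1-q) - (1-p)*(1-q)*(1-ml) - (1-p)*q*ml)*y0 < (1-p)*(1-q)*ml := by
    linarith only [hX]
  -- sqrt of the radicand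
  have hrad : (1 - mh*(1-q) - (1-p)*(1-q)*(1-ml) - (1-p)*q*ml)^2
      + 4*(1-p)*(1-q)*(mh - (1-p)*ml)*(1-ml)*q
      = ((2*((1-p)*(1-q)*ml) - (1 - mh*(1-q) - (1-p)*(1-q)*(1-ml) - (1-p)*q*ml)*y0)/y0)^2 := by
    field_simp
    linear_combination (4:ℝ) * hQ
  have hnn : 0 ≤ (2*((1-p)*(1-q)*ml)
      - (1 - mh*(1-q) - (1-p)*(1-q)*(1-ml) - (1-p)*q*ml)*y0)/y0 :=
    div_nonneg (by linarith only [hCy0, hEpos]) hy0pos.le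
  have hsq : Real.sqrt ((1 - mh*(1-q) - (1-p)*(1-q)*(1-ml) - (1-p)*q*ml)^2
      + 4*(1-p)*(1-q)*(mh - (1-p)*ml)*(1-ml)*q)
      = (2*((1-p)*(1-q)*ml)
        - (1 - mh*(1-q) - (1-p)*(1-q)*(1-ml) - (1-p)*q*ml)*y0)/y0 := by
    rw [hrad, Real.sqrt_sq hnn]
  have hmlne : ml ≠ 0 := ne_of_gt hml0
  have h1pne : (1:ℝ) - p ≠ 0 := ne_of_gt h1p
  have h1qne : (1:ℝ) - q ≠ 0 := ne_of_gt h1q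
  have heta1' : eta1 = 1/y0 := by
    rw [heta1, hsq]
    field_simp
    ring
  exact ⟨by rw [heta1', one_div_one_div], hy0gt1, hT0, hTs0⟩
end

section
/- Assume mu_l ≤ mu_h and F(y_0) < 0. Then 1 < 1/eta_1 < y_0, T*(1/eta_1) = 0, and T(1/eta_1) ≠ 0. -/
set_option maxHeartbeats 1600000 in
set_option maxRecDepth 16000 in
/-- Key Lemma case. -/
theorem key_lemma_neg
    (p q mh ml : ℝ)
    (hp : p ∈ Set.Ioo (0:ℝ) 1) (hq : q ∈ Set.Ioo (0:ℝ) 1)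
    (hmh : mh ∈ Set.Ioo (0:ℝ) 1) (hml : ml ∈ Set.Ioo (0:ℝ) 1)
    (hpar : p + q + mh + ml = 1)
    (hrho : p / mh + q / ml < 1)
    (hmu : ml ≤ mh)
    (Delta F T Tstar : ℝ → ℝ)
    (hDelta : ∀ y, Delta y = (p*mh - (1-p)*(1-mh))^2*(q*y + 1 - q)^2
        - 2*(p*mh + (1-p)*(1-mh))*(q*y + 1 - q) + 1)
    (hF : ∀ y, F y = ((1-p) + mh - 2*(1-p)*ml)*q*y^2
        + (((1-p) + mh - 2*(1-p)*ml)*(1-q) + 2*(1-p)*q*ml - 1)*y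
        + 2*(1-p)*(1-q)*ml)
    (hT : ∀ y, T y = F y - y * Real.sqrt (Delta y))
    (hTstar : ∀ y, Tstar y = F y + y * Real.sqrt (Delta y))
    (y0 : ℝ)
    (hy0 : y0 = (p*mh + (1-p)*(1-mh) - 2*Real.sqrt (p*mh*(1-p)*(1-mh)))
        / ((p*mh - (1-p)*(1-mh))^2 * q) - (1-q)/q)
    (eta1 : ℝ)
    (heta1 : eta1 = ((1 - mh*(1-q) - (1-p)*(1-q)*(1-ml) - (1-p)*q*ml)
        + Real.sqrt ((1 - mh*(1-q) - (1-p)*(1-q)*(1-ml) - (1-p)*q*ml)^2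
            + 4*(1-p)*(1-q)*(mh - (1-p)*ml)*(1-ml)*q))
        / (2*(1-p)*(1-q)*ml))
    (hFy0 : F y0 < 0) :
    1 < 1/eta1 ∧ 1/eta1 < y0 ∧ Tstar (1/eta1) = 0 ∧ T (1/eta1) ≠ 0 := by
  obtain ⟨hp0, hp1⟩ := hp
  obtain ⟨hq0, hq1⟩ := hq
  obtain ⟨hmh0, hmh1⟩ := hmh
  obtain ⟨hml0, hml1⟩ := hml
  have hp1' : 0 < 1 - p := by linarith
  have hq1' : 0 < 1 - q := by linarith
  have hmh1' : 0 < 1 - mh := by linarith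
  have hml1' : 0 < 1 - ml := by linarith
  have hpmh : p < mh := by
    have h1 : 0 < q / ml := div_pos hq0 hml0
    have h2 : p / mh < 1 := by linarith
    have := (div_lt_one hmh0).mp h2
    linarith
  -- a ≠ 0
  have ha : p*mh - (1-p)*(1-mh) ≠ 0 := by
    intro h
    have hy0' : y0 = 0 - (1-q)/q := by
      rw [hy0, h]
      norm_num
    have hFv : F y0 = (1-q)/q := by
      rw [hy0', hF]
      field_simp
      ring
    have : 0 < (1-q)/q := div_pos hq1' hq0
    rw [hFv] at hFy0
    linarith
  have ha2 : 0 < (p*mh - (1-p)*(1-mh))^2 :=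
    lt_of_le_of_ne (sq_nonneg _) (Ne.symm (pow_ne_zero 2 ha))
  have hu : 0 < p*mh := mul_pos hp0 hmh0
  have hv : 0 < (1-p)*(1-mh) := mul_pos hp1' hmh1'
  set r : ℝ := Real.sqrt (p*mh*(1-p)*(1-mh)) with hrdef
  have hr0 : 0 < r := Real.sqrt_pos.mpr (mul_pos (mul_pos hu hp1') hmh1')
  have hr2 : r^2 = p*mh*(1-p)*(1-mh) :=
    Real.sq_sqrt (le_of_lt (mul_pos (mul_pos hu hp1') hmh1'))
  -- basic positivity of 1-u-v
  have h1uv : 0 < 1 - p*mh - (1-p)*(1-mh) := by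
    linarith [mul_pos hp0 hmh1', mul_pos hp1' hmh0]
  have hpm2 : 0 < (p - mh)^2 := by
    have hlt : p - mh < 0 := by linarith
    rw [sq]; exact mul_pos_of_neg_of_neg hlt hlt
  have hAMGM : (1 - p*mh - (1-p)*(1-mh) - 2*r)*(1 - p*mh - (1-p)*(1-mh) + 2*r)
      = (p - mh)^2 := by linear_combination (-4 : ℝ) * hr2
  have h2r : 2*r < 1 - p*mh - (1-p)*(1-mh) := by
    by_contra hcon
    push_neg at hcon
    have hx : 1 - p*mh - (1-p)*(1-mh) - 2*r ≤ 0 := by linarith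
    have hy : (0:ℝ) ≤ 1 - p*mh - (1-p)*(1-mh) + 2*r := by linarith
    have := mul_nonpos_of_nonpos_of_nonneg hx hy
    linarith [hAMGM, this]
  have hB : (p*mh + (1-p)*(1-mh) - 2*r)*(p*mh + (1-p)*(1-mh) + 2*r)
      = (p*mh - (1-p)*(1-mh))^2 := by linear_combination (-4 : ℝ) * hr2
  have huv2r : 0 < p*mh + (1-p)*(1-mh) - 2*r := by
    by_contra hcon
    push_neg at hcon
    have hy : (0:ℝ) ≤ p*mh + (1-p)*(1-mh) + 2*r := by linarith
    have := mul_nonpos_of_nonpos_of_nonneg hcon hy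
    linarith [hB, this]
  have hb2ra : 0 < p*mh + (1-p)*(1-mh) - 2*r - (p*mh - (1-p)*(1-mh))^2 := by
    have hmul := mul_pos huv2r (show (0:ℝ) < 1 - (p*mh + (1-p)*(1-mh) + 2*r) by linarith)
    have hexp : (p*mh + (1-p)*(1-mh) - 2*r)*(1 - (p*mh + (1-p)*(1-mh) + 2*r))
        = (p*mh + (1-p)*(1-mh) - 2*r) - (p*mh - (1-p)*(1-mh))^2 := by
      linear_combination -hB
    linarith [hmul, hexp]
  have ha2q : 0 < (p*mh - (1-p)*(1-mh))^2 * q := mul_pos ha2 hq0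
  have hy0q : (p*mh - (1-p)*(1-mh))^2 * q * y0
      = (p*mh + (1-p)*(1-mh) - 2*r) - (p*mh - (1-p)*(1-mh))^2 * (1-q) := by
    rw [hy0]
    field_simp
  have hy0gt1 : 1 < y0 := by
    by_contra hcon
    push_neg at hcon
    have h9 : (p*mh - (1-p)*(1-mh))^2 * q * (y0 - 1)
        = p*mh + (1-p)*(1-mh) - 2*r - (p*mh - (1-p)*(1-mh))^2 := by
      linear_combination hy0q
    have := mul_nonpos_of_nonneg_of_nonpos (le_of_lt ha2q) (show y0 - 1 ≤ 0 by linarith)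
    linarith [h9, this]
  -- Delta factorization
  have hdfac : ∀ y : ℝ, (p*mh - (1-p)*(1-mh))^2 * Delta y
      = ((p*mh - (1-p)*(1-mh))^2*(q*y+1-q) - (p*mh + (1-p)*(1-mh) - 2*r))
        * ((p*mh - (1-p)*(1-mh))^2*(q*y+1-q) - (p*mh + (1-p)*(1-mh) + 2*r)) := by
    intro y
    rw [hDelta]
    linear_combination (4 : ℝ) * hr2
  have he1 : ∀ z : ℝ, (p*mh - (1-p)*(1-mh))^2*(q*z+1-q) - (p*mh + (1-p)*(1-mh) - 2*r)
      = (p*mh - (1-p)*(1-mh))^2 * q * (z - y0) := by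
    intro z
    linear_combination hy0q
  have hDpos : ∀ z : ℝ, 1 < z → z < y0 → 0 < Delta z := by
    intro z h1 h2
    have hX1 : (p*mh - (1-p)*(1-mh))^2*(q*z+1-q) - (p*mh + (1-p)*(1-mh) - 2*r) < 0 := by
      rw [he1 z]
      exact mul_neg_of_pos_of_neg ha2q (by linarith)
    have hX2 : (p*mh - (1-p)*(1-mh))^2*(q*z+1-q) - (p*mh + (1-p)*(1-mh) + 2*r) < 0 := by
      linarith
    have hprod := mul_pos_of_neg_of_neg hX1 hX2
    have hfz := hdfac z
    by_contra hcon
    push_neg at hcon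
    have := mul_nonpos_of_nonneg_of_nonpos (le_of_lt ha2) hcon
    linarith [hfz, hprod, this]
  have hDy0 : Delta y0 = 0 := by
    have hfz := hdfac y0
    have h0 : (p*mh - (1-p)*(1-mh))^2*(q*y0+1-q) - (p*mh + (1-p)*(1-mh) - 2*r) = 0 := by
      rw [he1 y0]; ring
    rw [h0, zero_mul] at hfz
    rcases mul_eq_zero.mp hfz with h | h
    · exact absurd h (pow_ne_zero 2 ha)
    · exact h
  -- endpoint values of Tstar
  have hF1 : F 1 = mh - p := by rw [hF]; ring
  have hD1 : Delta 1 = (mh - p)^2 := by rw [hDelta]; ring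
  have hTs1 : Tstar 1 = 2*(mh - p) := by
    rw [hTstar, hF1, hD1, Real.sqrt_sq (by linarith : (0:ℝ) ≤ mh - p)]
    ring
  have hTsy0 : Tstar y0 = F y0 := by
    rw [hTstar, hDy0, Real.sqrt_zero, mul_zero, add_zero]
  -- continuity and IVT
  have hTsc : Continuous Tstar := by
    have hfun : Tstar = fun y : ℝ =>
        (((1-p) + mh - 2*(1-p)*ml)*q*y^2
          + (((1-p) + mh - 2*(1-p)*ml)*(1-q) + 2*(1-p)*q*ml - 1)*y
          + 2*(1-p)*(1-q)*ml)
        + y * Real.sqrt ((p*mh - (1-p)*(1-mh))^2*(q*y + 1 - q)^2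
            - 2*(p*mh + (1-p)*(1-mh))*(q*y + 1 - q) + 1) := by
      funext y
      rw [hTstar, hF y, hDelta y]
    rw [hfun]
    have c1 : Continuous fun y : ℝ => ((1-p) + mh - 2*(1-p)*ml)*q*y^2
        + (((1-p) + mh - 2*(1-p)*ml)*(1-q) + 2*(1-p)*q*ml - 1)*y
        + 2*(1-p)*(1-q)*ml := by fun_prop
    have c2 : Continuous fun y : ℝ => (p*mh - (1-p)*(1-mh))^2*(q*y + 1 - q)^2
        - 2*(p*mh + (1-p)*(1-mh))*(q*y + 1 - q) + 1 := by fun_prop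
    exact c1.add (continuous_id.mul (Real.continuous_sqrt.comp c2))
  have h0mem : (0:ℝ) ∈ Set.Ioo (Tstar y0) (Tstar 1) := by
    constructor
    · rw [hTsy0]; exact hFy0
    · rw [hTs1]; linarith
  obtain ⟨z, hzmem, hTz⟩ :=
    intermediate_value_Ioo' (le_of_lt hy0gt1) hTsc.continuousOn h0mem
  obtain ⟨hz1, hzy0⟩ := hzmem
  -- properties at z
  have hDz : 0 < Delta z := hDpos z hz1 hzy0
  have hsz : 0 < Real.sqrt (Delta z) := Real.sqrt_pos.mpr hDz
  have hFzeq : F z = -(z * Real.sqrt (Delta z)) := by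
    have := hTstar z
    rw [hTz] at this
    linarith
  have hsq : (Real.sqrt (Delta z))^2 = Delta z := Real.sq_sqrt hDz.le
  have hFz2 : (F z)^2 = z^2 * Delta z := by
    rw [hFzeq, neg_sq, mul_pow, hsq]
  have hfact : (F z)^2 - z^2 * Delta z
      = (-4*(1-p)*(z-1)*(q*z+1-q))
        * ((1-p)*(1-q)*ml*ml
          - (1 - mh*(1-q) - (1-p)*(1-q)*(1-ml) - (1-p)*q*ml)*ml*z
          - q*(mh - (1-p)*ml)*(1-ml)*z^2) := by
    rw [hF, hDelta]
    ring
  have hGz : (1-p)*(1-q)*ml*ml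
      - (1 - mh*(1-q) - (1-p)*(1-q)*(1-ml) - (1-p)*q*ml)*ml*z
      - q*(mh - (1-p)*ml)*(1-ml)*z^2 = 0 := by
    have hHpos : 0 < 4*(1-p)*(z-1)*(q*z+1-q) := by
      have h1 : (0:ℝ) < 4*(1-p) := by linarith
      have h2 : (0:ℝ) < z - 1 := by linarith
      have h3 : (0:ℝ) < q*z+1-q := by linarith [mul_pos hq0 h2]
      exact mul_pos (mul_pos h1 h2) h3
    have hHne : -4*(1-p)*(z-1)*(q*z+1-q) ≠ 0 := by
      intro h
      have : -4*(1-p)*(z-1)*(q*z+1-q) = -(4*(1-p)*(z-1)*(q*z+1-q)) := by ring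
      rw [this] at h
      linarith [neg_eq_zero.mp h]
    have h0 : (0:ℝ) = (-4*(1-p)*(z-1)*(q*z+1-q))
        * ((1-p)*(1-q)*ml*ml
          - (1 - mh*(1-q) - (1-p)*(1-q)*(1-ml) - (1-p)*q*ml)*ml*z
          - q*(mh - (1-p)*ml)*(1-ml)*z^2) := by
      rw [← hfact, hFz2]; ring
    rcases mul_eq_zero.mp h0.symm with h | h
    · exact absurd h hHne
    · exact h
  -- eta1 analysis
  have hmC : 0 < mh - (1-p)*ml := by linarith [mul_pos hp0 hml0, hmu]
  have hE : 0 < 4*(1-p)*(1-q)*(mh - (1-p)*ml)*(1-ml)*q := by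
    have := mul_pos (mul_pos (mul_pos (mul_pos
      (mul_pos (show (0:ℝ) < 4 by norm_num) hp1') hq1') hmC) hml1') hq0
    linarith [this]
  set Bh : ℝ := 1 - mh*(1-q) - (1-p)*(1-q)*(1-ml) - (1-p)*q*ml with hBdef
  set s : ℝ := Real.sqrt (Bh^2 + 4*(1-p)*(1-q)*(mh - (1-p)*ml)*(1-ml)*q) with hsdef
  have hs0 : 0 ≤ s := Real.sqrt_nonneg _
  have hs2 : s^2 = Bh^2 + 4*(1-p)*(1-q)*(mh - (1-p)*ml)*(1-ml)*q :=
    Real.sq_sqrt (by linarith [sq_nonneg Bh, hE])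
  have hBs : 0 < Bh + s := by
    by_contra hcon
    push_neg at hcon
    have h1 : s ≤ -Bh := by linarith
    have h2 : s*s ≤ (-Bh)*(-Bh) := mul_le_mul h1 h1 hs0 (by linarith)
    linarith [hs2, h2, hE]
  have hA2 : 0 < 2*(1-p)*(1-q)*ml := by
    have := mul_pos (mul_pos (mul_pos (show (0:ℝ) < 2 by norm_num) hp1') hq1') hml0
    linarith [this]
  have heta_pos : 0 < eta1 := by
    rw [heta1]
    exact div_pos hBs hA2
  have hEq : eta1 * (2*(1-p)*(1-q)*ml) = Bh + s := by
    rw [heta1]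
    exact div_mul_cancel₀ _ (ne_of_gt hA2)
  have hq2big : (2*(1-p)*(1-q)*ml) * ((1-p)*(1-q)*ml*ml*eta1^2 - Bh*ml*eta1
      - q*(mh - (1-p)*ml)*(1-ml)) = 0 := by
    linear_combination (ml/2) * (2*(1-p)*(1-q)*ml*eta1 - Bh + s) * hEq + (ml/2) * hs2
  have hq2 : (1-p)*(1-q)*ml*ml*eta1^2 - Bh*ml*eta1
      - q*(mh - (1-p)*ml)*(1-ml) = 0 :=
    (mul_eq_zero.mp hq2big).resolve_left (ne_of_gt hA2)
  have hinv : eta1 * (1/eta1) = 1 := by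
    field_simp
  have hGw : (1-p)*(1-q)*ml*ml - Bh*ml*(1/eta1)
      - q*(mh - (1-p)*ml)*(1-ml)*(1/eta1)^2 = 0 := by
    linear_combination (1/eta1)^2 * hq2
      - ((1-p)*(1-q)*ml*ml*(1 + eta1*(1/eta1)) - Bh*ml*(1/eta1)) * hinv
  have hwpos : 0 < 1/eta1 := by positivity
  have hC2 : 0 < q*(mh - (1-p)*ml)*(1-ml) :=
    mul_pos (mul_pos hq0 hmC) hml1'
  have hzw : z = 1/eta1 := by
    by_contra hne
    have hdiff : (1/eta1 - z)
        * (Bh*ml + q*(mh - (1-p)*ml)*(1-ml)*(z + 1/eta1)) = 0 := by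
      linear_combination hGz - hGw
    rcases mul_eq_zero.mp hdiff with h | h
    · exact hne (by linarith [sub_eq_zero.mp h])
    · have hAml : (1-p)*(1-q)*ml*ml + q*(mh - (1-p)*ml)*(1-ml)*(z*(1/eta1)) = 0 := by
        linear_combination hGz + z * h
      have h1 : 0 < (1-p)*(1-q)*ml*ml :=
        mul_pos (mul_pos (mul_pos hp1' hq1') hml0) hml0
      have h2 : 0 < q*(mh - (1-p)*ml)*(1-ml)*(z*(1/eta1)) :=
        mul_pos hC2 (mul_pos (by linarith) hwpos)
      linarith
  refine ⟨by rw [← hzw]; exact hz1, by rw [← hzw]; exact hzy0, by rw [← hzw]; exact hTz, ?_⟩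
  rw [← hzw]
  have hTzval : T z = -(2 * (z * Real.sqrt (Delta z))) := by
    rw [hT, hFzeq]; ring
  have : T z < 0 := by
    rw [hTzval]
    have := mul_pos (show (0:ℝ) < z by linarith) hsz
    linarith
  exact ne_of_lt this
end

section
/- For each fixed integer j ≥ 0, the exact tail asymptotics along the high-priority direction holds: lim_{i→∞} pi_{i,j}/(i^j·r_0^i) = C^j·pi_{0,0}/j!, where C = (q/(1−q))·((1−p)·mu_h·r_0^2 + (p·mu_h+(1−p)(1−mu_h))·r_0 + p(1−mu_h))/(p(1−mu_h) − (1−p)·mu_h·r_0^2). -/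
/-!
For `i ≥ 1` the balance equations say that each column `i ↦ pi i j` solves the second-order
recurrence `D u(i) = B u(i-1) + A u(i+1)`, driven by column `j - 1`, whose characteristic
polynomial `A t² - D t + B` has the roots `r0 < 1 < r₂`. Summability makes every column tend to
zero, which kills the `r₂ ^ i` mode; hence column `0` is `pi 0 0 * r0 ^ i`, and inductively
column `j` is `P_j(i) * r0 ^ i` for a polynomial `P_j` of degree `j`, obtained by inverting a
difference operator on polynomials. Each step multiplies the top coefficient by `C / (j + 1)`.
-/

open Polynomial Filter Topology

theorem quadratic_roots_straddle_one {A B D x r : ℝ} (hA : 0 < A) (hB : 0 < B) (hD : A + B < D)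
    (hx : x = (D + √(D ^ 2 - 4 * A * B)) / (2 * B)) (hr : r = 1 / x) :
    r ∈ Set.Ioo 0 1 ∧ ∃ r₂, 1 < r₂ ∧ D = A * (r + r₂) ∧ B = A * r * r₂ := by
  set s := √(D ^ 2 - 4 * A * B)
  have hs0 : 0 ≤ s := Real.sqrt_nonneg _
  have hs2 : s ^ 2 = D ^ 2 - 4 * A * B := Real.sq_sqrt (by nlinarith [sq_nonneg (A - B)])
  have hDs : 0 < D + s := by linarith
  rw [hx, one_div_div] at hr
  subst hr
  refine ⟨⟨by positivity, ?_⟩, (D + s) / (2 * A), ?_, ?_, ?_⟩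
  · rw [div_lt_one hDs]; nlinarith
  · rw [one_lt_div (by positivity)]; nlinarith
  · field_simp; linear_combination -hs2
  · field_simp

namespace Polynomial

variable {K : Type*} [Field K]

theorem coeff_taylor_of_natDegree_le_succ {f : K[X]} {n : ℕ} (hf : f.natDegree ≤ n + 1) (r : K) :
    (taylor r f).coeff n = f.coeff n + (n + 1) * r * f.coeff (n + 1) := by
  have hdeg : (hasseDeriv n f).natDegree < 2 :=
    (natDegree_hasseDeriv_le f n).trans_lt (by omega)
  rw [taylor_coeff, eval_eq_sum_range' hdeg, Finset.sum_range_succ, Finset.sum_range_one,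
    hasseDeriv_coeff, hasseDeriv_coeff, zero_add, Nat.choose_self, add_comm 1 n,
    Nat.choose_succ_self_right]
  push_cast
  ring

noncomputable def diffOp (c₂ c₃ : K) : K[X] →ₗ[K] K[X] :=
  c₂ • (LinearMap.id - taylor 1) + c₃ • (LinearMap.id - taylor (-1))

theorem eval_diffOp (c₂ c₃ : K) (f : K[X]) (x : K) :
    (diffOp c₂ c₃ f).eval x =
      c₂ * (f.eval x - f.eval (x + 1)) + c₃ * (f.eval x - f.eval (x - 1)) := by
  simp only [diffOp, LinearMap.add_apply, LinearMap.smul_apply, LinearMap.sub_apply,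
    LinearMap.id_apply, eval_add, eval_smul, eval_sub, smul_eq_mul, taylor_eval, ← sub_eq_add_neg]

theorem coeff_diffOp {f : K[X]} {n : ℕ} (hf : f.natDegree ≤ n + 1) (c₂ c₃ : K) :
    (diffOp c₂ c₃ f).coeff n = (n + 1) * (c₃ - c₂) * f.coeff (n + 1) := by
  simp only [diffOp, LinearMap.add_apply, LinearMap.smul_apply, LinearMap.sub_apply,
    LinearMap.id_apply, coeff_add, coeff_smul, coeff_sub, smul_eq_mul,
    coeff_taylor_of_natDegree_le_succ hf]
  ring

variable [CharZero K]

theorem exists_diffOp_eq_of_degree_lt {c₂ c₃ : K} (hc : c₂ ≠ c₃) (n : ℕ) {g : K[X]}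
    (hg : g.degree < n) : ∃ f : K[X], f.degree ≤ n ∧ diffOp c₂ c₃ f = g := by
  induction n generalizing g with
  | zero => exact ⟨0, by simp, by simp [degree_eq_bot.mp (Nat.WithBot.lt_zero_iff.mp hg)]⟩
  | succ n ih =>
    set a := g.coeff n / ((n + 1) * (c₃ - c₂))
    have hmono : (C a * X ^ (n + 1)).natDegree ≤ n + 1 := natDegree_C_mul_X_pow_le a _
    obtain ⟨f, hf, hfg⟩ := ih (g := g - diffOp c₂ c₃ (C a * X ^ (n + 1))) <| by
      rw [degree_lt_iff_coeff_zero]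
      intro m hm
      rw [coeff_sub, coeff_diffOp (hmono.trans (by omega)), coeff_C_mul_X_pow]
      rcases hm.eq_or_lt with rfl | hm
      · have : ((n : K) + 1) * (c₃ - c₂) ≠ 0 :=
          mul_ne_zero (by exact_mod_cast n.succ_ne_zero) (sub_ne_zero.mpr hc.symm)
        simp [a, mul_div_cancel₀ _ this]
      · rw [(degree_lt_iff_coeff_zero g _).mp hg m (by omega), if_neg (by omega)]
        ring
    refine ⟨C a * X ^ (n + 1) + f, ?_, by rw [map_add, hfg, add_sub_cancel]⟩
    refine (degree_add_le _ _).trans (max_le ?_ (hf.trans (by exact_mod_cast n.le_succ)))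
    exact (degree_C_mul_X_pow_le _ _).trans (by simp)

theorem tendsto_eval_div_pow_atTop {P : ℝ[X]} {j : ℕ} (hP : P.natDegree ≤ j) :
    Tendsto (fun x : ℝ => P.eval x / x ^ j) atTop (𝓝 (P.coeff j)) := by
  have hX : (X ^ j : ℝ[X]).degree = j := degree_X_pow j
  simp only [← eval_X_pow (R := ℝ) (n := j)]
  by_cases hc : P.coeff j = 0
  · rw [hc]
    refine div_tendsto_atTop_zero_of_degree_lt _ _ (hX ▸ ?_)
    refine (degree_lt_iff_coeff_zero P j).mpr fun m hm => ?_
    rcases hm.eq_or_lt with rfl | hm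
    · exact hc
    · exact coeff_eq_zero_of_natDegree_lt (hP.trans_lt hm)
  · have hdeg : P.natDegree = j := le_antisymm hP (le_natDegree_of_ne_zero hc)
    have := div_tendsto_atTop_leadingCoeff_div_of_degree_eq P (X ^ j)
      (by rw [hX, degree_eq_natDegree (fun h => hc (by simp [h])), hdeg])
    rwa [leadingCoeff_X_pow, div_one, leadingCoeff, hdeg] at this

theorem tendsto_eval_natCast_div_pow {P : ℝ[X]} {j : ℕ} (hP : P.natDegree ≤ j) :
    Tendsto (fun i : ℕ => P.eval (i : ℝ) / (i : ℝ) ^ j) atTop (𝓝 (P.coeff j)) :=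
  (tendsto_eval_div_pow_atTop hP).comp tendsto_natCast_atTop_atTop

theorem tendsto_eval_natCast_mul_pow {r : ℝ} (hr : |r| < 1) (P : ℝ[X]) :
    Tendsto (fun i : ℕ => P.eval (i : ℝ) * r ^ i) atTop (𝓝 0) := by
  have := (tendsto_eval_natCast_div_pow le_rfl (P := P)).mul
    (tendsto_pow_const_mul_const_pow_of_abs_lt_one P.natDegree hr)
  rw [mul_zero] at this
  refine this.congr' ((eventually_ne_atTop 0).mono fun i hi => ?_)
  have : (i : ℝ) ^ P.natDegree ≠ 0 := pow_ne_zero _ (Nat.cast_ne_zero.mpr hi)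
  field_simp

end Polynomial

theorem eq_mul_pow_of_recurrence_of_tendsto_zero {A B D r₀ r₂ : ℝ} (hA : A ≠ 0)
    (hD : D = A * (r₀ + r₂)) (hB : B = A * r₀ * r₂) (hr₂ : 1 ≤ |r₂|) {u : ℕ → ℝ}
    (hu : ∀ n, D * u (n + 1) = B * u n + A * u (n + 2)) (hlim : Tendsto u atTop (𝓝 0))
    (n : ℕ) : u n = u 0 * r₀ ^ n := by
  -- `u (n + 1) - r₀ u n` is geometric with ratio `r₂`
  set v : ℕ → ℝ := fun n => u (n + 1) - r₀ * u n
  have hv_succ (n : ℕ) : v (n + 1) = r₂ * v n :=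
    mul_left_cancel₀ hA (by linear_combination (-(hu n)) + (u (n + 1)) * hD - u n * hB)
  have hv (n : ℕ) : v n = r₂ ^ n * v 0 := by
    induction n with
    | zero => simp
    | succ n ih => rw [hv_succ, ih]; ring
  have hv_lim : Tendsto (fun n => |v n|) atTop (𝓝 0) := by
    simpa using ((hlim.comp (tendsto_add_atTop_nat 1)).sub (hlim.const_mul r₀)).abs
  have hv0 : v 0 = 0 := by
    refine abs_nonpos_iff.mp (ge_of_tendsto' hv_lim fun n => ?_)
    rw [hv n, abs_mul, abs_pow]
    exact le_mul_of_one_le_left (abs_nonneg _) (one_le_pow₀ hr₂)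
  induction n with
  | zero => simp
  | succ n ih =>
    have : u (n + 1) - r₀ * u n = 0 := by simpa [v, hv0] using hv n
    rw [pow_succ, ← mul_assoc, ← ih]
    linarith

theorem exists_poly_of_column_recurrence {A B D α β γ r₀ r₂ : ℝ} (hA : A ≠ 0)
    (hD : D = A * (r₀ + r₂)) (hB : B = A * r₀ * r₂) (hr₀ : r₀ ≠ 0) (hr₀1 : |r₀| < 1)
    (hr₂ : 1 ≤ |r₂|) {P : ℝ[X]} {j : ℕ} (hP : P.natDegree ≤ j) {v u : ℕ → ℝ}
    (hv : ∀ i, v i = P.eval (i : ℝ) * r₀ ^ i) (hlim : Tendsto u atTop (𝓝 0))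
    (hu : ∀ n, D * u (n + 1) =
      B * u n + A * u (n + 2) + α * v (n + 2) + β * v (n + 1) + γ * v n) :
    ∃ R : ℝ[X], R.natDegree ≤ j + 1 ∧
      R.coeff (j + 1) = (α * r₀ ^ 2 + β * r₀ + γ) / (B - A * r₀ ^ 2) * P.coeff j / (j + 1) ∧
      ∀ i, u i = R.eval (i : ℝ) * r₀ ^ i := by
  have hBA : B - A * r₀ ^ 2 ≠ 0 := by
    have hne : r₂ - r₀ ≠ 0 := sub_ne_zero.mpr fun h => by
      rw [h] at hr₂; linarith [le_abs_self r₀, neg_abs_le r₀]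
    rw [show B - A * r₀ ^ 2 = A * r₀ * (r₂ - r₀) by rw [hB]; ring]
    exact mul_ne_zero (mul_ne_zero hA hr₀) hne
  -- dividing the column equation by `r₀ ^ n` turns it into `diffOp (A r₀²) B R = g`
  set g : ℝ[X] := C (α * r₀ ^ 2) * taylor 1 P + C (β * r₀) * P + C γ * taylor (-1) P
  have hg_deg : g.natDegree ≤ j := by
    refine natDegree_add_le_of_degree_le (natDegree_add_le_of_degree_le ?_ ?_) ?_ <;>
      refine (natDegree_C_mul_le _ _).trans ?_ <;> simpa using hP
  have hg_coeff : g.coeff j = (α * r₀ ^ 2 + β * r₀ + γ) * P.coeff j := by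
    have hP' : P.natDegree ≤ j + 1 := hP.trans j.le_succ
    simp only [g, coeff_add, coeff_C_mul, coeff_taylor_of_natDegree_le_succ hP',
      coeff_eq_zero_of_natDegree_lt (hP.trans_lt j.lt_succ_self)]
    ring
  obtain ⟨R, hR_deg, hR⟩ := exists_diffOp_eq_of_degree_lt (c₂ := A * r₀ ^ 2) (c₃ := B)
    (fun h => hBA (by rw [h, sub_self])) (j + 1)
    ((degree_le_of_natDegree_le hg_deg).trans_lt (by exact_mod_cast j.lt_succ_self))
  rw [← natDegree_le_iff_degree_le] at hR_deg
  have hR_coeff := coeff_diffOp hR_deg (A * r₀ ^ 2) B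
  rw [hR, hg_coeff] at hR_coeff
  set w : ℕ → ℝ := fun i => u i - R.eval (i : ℝ) * r₀ ^ i
  have hw (n : ℕ) : D * w (n + 1) = B * w n + A * w (n + 2) := by
    have h := congrArg (eval ((n : ℝ) + 1)) hR
    simp only [eval_diffOp, g, eval_add, eval_mul, eval_C, taylor_eval, add_sub_cancel_right,
      add_assoc, one_add_one_eq_two, add_neg_cancel, add_zero] at h
    have hun := hu n
    simp only [hv] at hun
    simp only [w]
    push_cast at hun ⊢
    linear_combination hun - r₀ ^ n * h - eval ((n : ℝ) + 1) R * r₀ ^ (n + 1) * hD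
      + eval ((n : ℝ) + 1) R * r₀ ^ n * hB
  have hw_lim : Tendsto w atTop (𝓝 0) := by
    simpa using hlim.sub (tendsto_eval_natCast_mul_pow hr₀1 R)
  refine ⟨R + C (w 0), ?_, ?_, fun i => ?_⟩
  · exact natDegree_add_le_of_degree_le hR_deg (by simp)
  · rw [coeff_add, coeff_C_succ, add_zero, eq_div_iff (by positivity), div_mul_eq_mul_div,
      eq_div_iff hBA]
    linear_combination -hR_coeff
  · have := eq_mul_pow_of_recurrence_of_tendsto_zero hA hD hB hr₂ hw hw_lim i
    simp only [w, eval_add, eval_C] at this ⊢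
    linarith

theorem exists_poly_of_column_recurrences {A B D α β γ r₀ r₂ : ℝ} (hA : A ≠ 0)
    (hD : D = A * (r₀ + r₂)) (hB : B = A * r₀ * r₂) (hr₀ : r₀ ≠ 0) (hr₀1 : |r₀| < 1)
    (hr₂ : 1 ≤ |r₂|) {π : ℕ → ℕ → ℝ} (hlim : ∀ j, Tendsto (fun i => π i j) atTop (𝓝 0))
    (hzero : ∀ n, D * π (n + 1) 0 = B * π n 0 + A * π (n + 2) 0)
    (hsucc : ∀ n j, D * π (n + 1) (j + 1) = B * π n (j + 1) + A * π (n + 2) (j + 1)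
      + α * π (n + 2) j + β * π (n + 1) j + γ * π n j) (j : ℕ) :
    ∃ P : ℝ[X], P.natDegree ≤ j ∧
      P.coeff j = ((α * r₀ ^ 2 + β * r₀ + γ) / (B - A * r₀ ^ 2)) ^ j * π 0 0 / j.factorial ∧
      ∀ i, π i j = P.eval (i : ℝ) * r₀ ^ i := by
  induction j with
  | zero =>
    refine ⟨C (π 0 0), by simp, by simp, fun i => ?_⟩
    simpa using eq_mul_pow_of_recurrence_of_tendsto_zero hA hD hB hr₂ hzero (hlim 0) i
  | succ j ih =>
    obtain ⟨P, hP_deg, hP_coeff, hP⟩ := ih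
    obtain ⟨R, hR_deg, hR_coeff, hR⟩ := exists_poly_of_column_recurrence hA hD hB hr₀ hr₀1 hr₂
      hP_deg hP (hlim (j + 1)) (fun n => hsucc n j)
    refine ⟨R, hR_deg, ?_, hR⟩
    rw [hR_coeff, hP_coeff, Nat.factorial_succ]
    push_cast
    field_simp
    ring

theorem tendsto_div_pow_mul_pow_of_column_recurrences {A B D α β γ r₀ r₂ : ℝ} (hA : A ≠ 0)
    (hD : D = A * (r₀ + r₂)) (hB : B = A * r₀ * r₂) (hr₀ : r₀ ≠ 0) (hr₀1 : |r₀| < 1)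
    (hr₂ : 1 ≤ |r₂|) {π : ℕ → ℕ → ℝ} (hlim : ∀ j, Tendsto (fun i => π i j) atTop (𝓝 0))
    (hzero : ∀ n, D * π (n + 1) 0 = B * π n 0 + A * π (n + 2) 0)
    (hsucc : ∀ n j, D * π (n + 1) (j + 1) = B * π n (j + 1) + A * π (n + 2) (j + 1)
      + α * π (n + 2) j + β * π (n + 1) j + γ * π n j) (j : ℕ) :
    Tendsto (fun i : ℕ => π i j / ((i : ℝ) ^ j * r₀ ^ i)) atTop
      (𝓝 (((α * r₀ ^ 2 + β * r₀ + γ) / (B - A * r₀ ^ 2)) ^ j * π 0 0 / j.factorial)) := by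
  obtain ⟨P, hP_deg, hP_coeff, hP⟩ :=
    exists_poly_of_column_recurrences hA hD hB hr₀ hr₀1 hr₂ hlim hzero hsucc j
  rw [← hP_coeff]
  refine (tendsto_eval_natCast_div_pow hP_deg).congr fun i => ?_
  rw [hP, mul_div_mul_right _ _ (pow_ne_zero i hr₀)]

theorem tail_high_priority_joint_general
    (p q mh ml : ℝ)
    (hp : p ∈ Set.Ioo (0:ℝ) 1) (hq : q ∈ Set.Ioo (0:ℝ) 1)
    (hmh : mh ∈ Set.Ioo (0:ℝ) 1)
    (Delta : ℝ → ℝ)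
    (hDelta : ∀ y, Delta y = (p*mh - (1-p)*(1-mh))^2*(q*y + 1 - q)^2
        - 2*(p*mh + (1-p)*(1-mh))*(q*y + 1 - q) + 1)
    (x10 r0 : ℝ)
    (hx10 : x10 = (1 - (p*mh + (1-p)*(1-mh))*(1-q) + Real.sqrt (Delta 0))
        / (2*p*(1-mh)*(1-q)))
    (hr0 : r0 = 1 / x10)
    (pi : ℕ → ℕ → ℝ)
    (hsum : HasSum (fun ij : ℕ × ℕ => pi ij.1 ij.2) 1)
    (hbal : BalanceEquations p q mh ml pi)
    (C : ℝ)
    (hC : C = (q/(1-q)) * ((1-p)*mh*r0^2 + (p*mh + (1-p)*(1-mh))*r0 + p*(1-mh))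
        / (p*(1-mh) - (1-p)*mh*r0^2))
    : ∀ j : ℕ,
      Filter.Tendsto (fun i : ℕ => pi i j / ((i:ℝ)^j * r0 ^ i))
        Filter.atTop
        (nhds (C^j * pi 0 0 / (Nat.factorial j : ℝ))) := by
  obtain ⟨hp0, hp1⟩ := hp
  obtain ⟨hq0, hq1⟩ := hq
  obtain ⟨hmh0, hmh1⟩ := hmh
  obtain ⟨-, hzero, -, hsucc⟩ := hbal
  set A := (1 - p) * (1 - q) * mh with hA
  set B := p * (1 - q) * (1 - mh) with hB
  set D := 1 - ((1 - p) * (1 - q) * (1 - mh) + p * (1 - q) * mh) with hD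
  have hDq : D = A + B + q := by rw [hA, hB, hD]; ring
  have hx10' : x10 = (D + √(D ^ 2 - 4 * A * B)) / (2 * B) := by
    rw [hx10, hDelta, hA, hB, hD]; congr 1 <;> ring_nf
  obtain ⟨⟨hr0_pos, hr0_lt⟩, r₂, hr₂, hD_vieta, hB_vieta⟩ :=
    quadratic_roots_straddle_one (by positivity) (by positivity) (by linarith) hx10' hr0
  have hC' : C = ((1 - p) * q * mh * r0 ^ 2 + (p * q * mh + (1 - p) * q * (1 - mh)) * r0
      + p * q * (1 - mh)) / (B - A * r0 ^ 2) := by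
    rw [hC, mul_div_assoc, div_mul_div_comm, hA, hB]
    congr 1 <;> ring
  intro j
  rw [hC']
  refine tendsto_div_pow_mul_pow_of_column_recurrences (π := pi) (by positivity) hD_vieta
    hB_vieta hr0_pos.ne' (abs_lt.mpr ⟨by linarith, hr0_lt⟩) (hr₂.le.trans (le_abs_self r₂))
    (fun j => (hsum.summable.comp_injective (Prod.mk_left_injective j)).tendsto_atTop_zero)
    (fun n => ?_) (fun n j => ?_) j
  · simpa only [Nat.add_sub_cancel] using hzero (n + 1) n.succ_pos
  · simpa only [Nat.add_sub_cancel] using hsucc (n + 1) (j + 1) n.succ_pos j.succ_pos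

/-- exact tail asymptotics along the high-priority direction:
`pi_{i,j} ~ (C^j·pi_{0,0}/j!)·i^j·r_0^i` for each fixed `j`. -/
theorem tail_high_priority_joint
    (p q mh ml : ℝ)
    (hp : p ∈ Set.Ioo (0:ℝ) 1) (hq : q ∈ Set.Ioo (0:ℝ) 1)
    (hmh : mh ∈ Set.Ioo (0:ℝ) 1) (hml : ml ∈ Set.Ioo (0:ℝ) 1)
    (hpar : p + q + mh + ml = 1)
    (hrho : p / mh + q / ml < 1)
    (Delta : ℝ → ℝ)
    (hDelta : ∀ y, Delta y = (p*mh - (1-p)*(1-mh))^2*(q*y + 1 - q)^2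
        - 2*(p*mh + (1-p)*(1-mh))*(q*y + 1 - q) + 1)
    (x10 r0 : ℝ)
    (hx10 : x10 = (1 - (p*mh + (1-p)*(1-mh))*(1-q) + Real.sqrt (Delta 0))
        / (2*p*(1-mh)*(1-q)))
    (hr0 : r0 = 1 / x10)
    (pi : ℕ → ℕ → ℝ)
    (hnn : ∀ i j : ℕ, 0 ≤ pi i j)
    (hsum : HasSum (fun ij : ℕ × ℕ => pi ij.1 ij.2) 1)
    (hbal : BalanceEquations p q mh ml pi)
    (C : ℝ)
    (hC : C = (q/(1-q)) * ((1-p)*mh*r0^2 + (p*mh + (1-p)*(1-mh))*r0 + p*(1-mh))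
        / (p*(1-mh) - (1-p)*mh*r0^2))
    : ∀ j : ℕ,
      Filter.Tendsto (fun i : ℕ => pi i j / ((i:ℝ)^j * r0 ^ i))
        Filter.atTop
        (nhds (C^j * pi 0 0 / (Nat.factorial j : ℝ))) :=
  tail_high_priority_joint_general p q mh ml hp hq hmh Delta hDelta x10 r0 hx10 hr0 pi hsum hbal C
    hC
end
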